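/- arXiv:2103.08655 — 7 statements merged into one kernel-verified Lean document; each statement's English description precedes it below -/
import Mathlib

section
/- The category of pastures has fibered products (pullbacks): for any pastures P, P₁, P₂ and any morphisms of pastures f₁ : P₁ → P and f₂ : P₂ → P, there exists a pasture Q together with morphisms of pastures π₁ : Q → P₁ and π₂ : Q → P₂ with f₁ ∘ π₁ = f₂ ∘ π₂, such that for every pasture P' with morphisms g₁ : P' → P₁ and g₂ : P' → P₂ satisfying f₁ ∘ g₁ = f₂ ∘ g₂ there is a unique morphism of pastures g : P' → Q with π₁ ∘ g = g₁ and π₂ ∘ g = g₂. -/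
universe u v w

/-- A pasture structure on a type `P`: a multiplication, a zero, a one,
an involution `neg`, and a ternary nullset relation `null a b c`
(meaning "`a + b + c = 0`"). -/
structure PastureStr (P : Type u) where
  mul : P → P → P
  zero : P
  one : P
  neg : P → P
  null : P → P → P → Prop

/-- `P` together with a `PastureStr` is a pasture: `P` is a commutative
monoid with zero whose nonzero elements form an abelian group, `neg` is an
involution fixing `0`, and the nullset is invariant under permutations,
invariant under multiplication, and satisfies `a + b + 0 = 0 ↔ a = -b`. -/
structure PastureStr.IsPasture {P : Type u} (S : PastureStr P) : Prop where
  mul_comm : ∀ a b : P, S.mul a b = S.mul b a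
  mul_assoc : ∀ a b c : P, S.mul (S.mul a b) c = S.mul a (S.mul b c)
  one_mul : ∀ a : P, S.mul S.one a = a
  zero_mul : ∀ a : P, S.mul S.zero a = S.zero
  one_ne_zero : S.one ≠ S.zero
  mul_ne_zero : ∀ a b : P, a ≠ S.zero → b ≠ S.zero → S.mul a b ≠ S.zero
  exists_inv : ∀ a : P, a ≠ S.zero → ∃ b : P, S.mul a b = S.one
  neg_neg : ∀ a : P, S.neg (S.neg a) = a
  neg_zero : S.neg S.zero = S.zero
  null_swap_left : ∀ a b c : P, S.null a b c → S.null b a c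
  null_swap_right : ∀ a b c : P, S.null a b c → S.null a c b
  null_mul : ∀ d a b c : P, S.null a b c → S.null (S.mul d a) (S.mul d b) (S.mul d c)
  null_zero : ∀ a b : P, S.null a b S.zero ↔ a = S.neg b

/-- A morphism of pastures: a multiplicative map preserving `0`, `1`,
the involution and the nullset. -/
structure PastureStr.IsHom {P : Type u} {P' : Type v} (S : PastureStr P) (T : PastureStr P')
    (f : P → P') : Prop where
  map_mul : ∀ a b : P, f (S.mul a b) = T.mul (f a) (f b)
  map_zero : f S.zero = T.zero
  map_one : f S.one = T.one
  map_neg : ∀ a : P, f (S.neg a) = T.neg (f a)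
  map_null : ∀ a b c : P, S.null a b c → T.null (f a) (f b) (f c)

/-!
The fibered product is the set-theoretic one, `{(a, b) | f₁ a = f₂ b}`, with all operations
and the nullset taken componentwise. It is again a pasture because morphisms of pastures
reflect `0` (they send units to units), so a nonzero pair has both components nonzero; its
inverse is the pair of inverses, which lies in the fibered product since `f₁ a⁻¹` and
`f₂ b⁻¹` are both the inverse of `f₁ a = f₂ b`.
-/

namespace PastureStr

variable {P : Type u} {P₁ : Type v} {P₂ : Type w}

theorem IsPasture.inv_unique {S : PastureStr P} (hS : S.IsPasture) {a b c : P}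
    (hb : S.mul a b = S.one) (hc : S.mul a c = S.one) : b = c :=
  calc b = S.mul (S.mul a c) b := by rw [hc, hS.one_mul]
    _ = S.mul (S.mul a b) c := by rw [hS.mul_assoc, hS.mul_comm c, hS.mul_assoc]
    _ = c := by rw [hb, hS.one_mul]

theorem IsHom.map_ne_zero {S₁ : PastureStr P₁} {S : PastureStr P} {f : P₁ → P}
    (hS₁ : S₁.IsPasture) (hS : S.IsPasture) (hf : S₁.IsHom S f) {a : P₁} (ha : a ≠ S₁.zero) :
    f a ≠ S.zero := by
  intro hfa
  obtain ⟨b, hb⟩ := hS₁.exists_inv a ha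
  have h : S.mul (f a) (f b) = S.one := by rw [← hf.map_mul, hb, hf.map_one]
  rw [hfa, hS.zero_mul] at h
  exact hS.one_ne_zero h.symm

def FiberProd (f₁ : P₁ → P) (f₂ : P₂ → P) : Type (max v w) :=
  {q : P₁ × P₂ // f₁ q.1 = f₂ q.2}

namespace FiberProd

variable {f₁ : P₁ → P} {f₂ : P₂ → P}

def fst (q : FiberProd f₁ f₂) : P₁ := q.1.1

def snd (q : FiberProd f₁ f₂) : P₂ := q.1.2

theorem map_fst_eq (q : FiberProd f₁ f₂) : f₁ q.fst = f₂ q.snd := q.2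

theorem comp_fst_eq_comp_snd : f₁ ∘ fst = f₂ ∘ (snd : FiberProd f₁ f₂ → P₂) :=
  funext map_fst_eq

theorem ext {x y : FiberProd f₁ f₂} (h₁ : x.fst = y.fst) (h₂ : x.snd = y.snd) : x = y :=
  Subtype.ext (Prod.ext h₁ h₂)

theorem hom_ext {P' : Type*} {g g' : P' → FiberProd f₁ f₂}
    (h₁ : fst ∘ g = fst ∘ g') (h₂ : snd ∘ g = snd ∘ g') : g = g' :=
  funext fun p => ext (congrFun h₁ p) (congrFun h₂ p)

def lift {P' : Type*} (g₁ : P' → P₁) (g₂ : P' → P₂) (h : f₁ ∘ g₁ = f₂ ∘ g₂) :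
    P' → FiberProd f₁ f₂ :=
  fun p => ⟨(g₁ p, g₂ p), congrFun h p⟩

end FiberProd

open FiberProd

variable {S : PastureStr P} {S₁ : PastureStr P₁} {S₂ : PastureStr P₂}
  {f₁ : P₁ → P} {f₂ : P₂ → P}

def fiberProd (hf₁ : S₁.IsHom S f₁) (hf₂ : S₂.IsHom S f₂) : PastureStr (FiberProd f₁ f₂) where
  mul a b := ⟨(S₁.mul a.fst b.fst, S₂.mul a.snd b.snd), by
    rw [hf₁.map_mul, hf₂.map_mul, a.map_fst_eq, b.map_fst_eq]⟩
  zero := ⟨(S₁.zero, S₂.zero), by rw [hf₁.map_zero, hf₂.map_zero]⟩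
  one := ⟨(S₁.one, S₂.one), by rw [hf₁.map_one, hf₂.map_one]⟩
  neg a := ⟨(S₁.neg a.fst, S₂.neg a.snd), by rw [hf₁.map_neg, hf₂.map_neg, a.map_fst_eq]⟩
  null a b c := S₁.null a.fst b.fst c.fst ∧ S₂.null a.snd b.snd c.snd

variable (hf₁ : S₁.IsHom S f₁) (hf₂ : S₂.IsHom S f₂)

theorem fiberProd_components_ne_zero (hS : S.IsPasture) (hS₁ : S₁.IsPasture)
    (hS₂ : S₂.IsPasture) {q : FiberProd f₁ f₂} (hq : q ≠ (fiberProd hf₁ hf₂).zero) :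
    q.fst ≠ S₁.zero ∧ q.snd ≠ S₂.zero := by
  have hfst : q.fst = S₁.zero ↔ q.snd = S₂.zero := by
    constructor
    · intro h₁
      by_contra h₂
      exact hf₂.map_ne_zero hS₂ hS h₂ (by rw [← q.map_fst_eq, h₁, hf₁.map_zero])
    · intro h₂
      by_contra h₁
      exact hf₁.map_ne_zero hS₁ hS h₁ (by rw [q.map_fst_eq, h₂, hf₂.map_zero])
  exact ⟨fun h₁ => hq (ext h₁ (hfst.mp h₁)), fun h₂ => hq (ext (hfst.mpr h₂) h₂)⟩

theorem fiberProd_exists_inv (hS : S.IsPasture) (hS₁ : S₁.IsPasture) (hS₂ : S₂.IsPasture)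
    (q : FiberProd f₁ f₂) (hq : q ≠ (fiberProd hf₁ hf₂).zero) :
    ∃ r, (fiberProd hf₁ hf₂).mul q r = (fiberProd hf₁ hf₂).one := by
  obtain ⟨hq₁, hq₂⟩ := fiberProd_components_ne_zero hf₁ hf₂ hS hS₁ hS₂ hq
  obtain ⟨b₁, hb₁⟩ := hS₁.exists_inv _ hq₁
  obtain ⟨b₂, hb₂⟩ := hS₂.exists_inv _ hq₂
  have hb : f₁ b₁ = f₂ b₂ := by
    refine hS.inv_unique (a := f₁ q.fst) ?_ ?_
    · rw [← hf₁.map_mul, hb₁, hf₁.map_one]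
    · rw [q.map_fst_eq, ← hf₂.map_mul, hb₂, hf₂.map_one]
  exact ⟨⟨(b₁, b₂), hb⟩, ext hb₁ hb₂⟩

theorem isPasture_fiberProd (hS : S.IsPasture) (hS₁ : S₁.IsPasture) (hS₂ : S₂.IsPasture) :
    (fiberProd hf₁ hf₂).IsPasture where
  mul_comm _ _ := ext (hS₁.mul_comm _ _) (hS₂.mul_comm _ _)
  mul_assoc _ _ _ := ext (hS₁.mul_assoc _ _ _) (hS₂.mul_assoc _ _ _)
  one_mul _ := ext (hS₁.one_mul _) (hS₂.one_mul _)
  zero_mul _ := ext (hS₁.zero_mul _) (hS₂.zero_mul _)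
  one_ne_zero h := hS₁.one_ne_zero (congrArg fst h)
  mul_ne_zero _ _ ha hb h :=
    hS₁.mul_ne_zero _ _ (fiberProd_components_ne_zero hf₁ hf₂ hS hS₁ hS₂ ha).1
      (fiberProd_components_ne_zero hf₁ hf₂ hS hS₁ hS₂ hb).1 (congrArg fst h)
  exists_inv := fiberProd_exists_inv hf₁ hf₂ hS hS₁ hS₂
  neg_neg _ := ext (hS₁.neg_neg _) (hS₂.neg_neg _)
  neg_zero := ext hS₁.neg_zero hS₂.neg_zero
  null_swap_left _ _ _ h := ⟨hS₁.null_swap_left _ _ _ h.1, hS₂.null_swap_left _ _ _ h.2⟩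
  null_swap_right _ _ _ h := ⟨hS₁.null_swap_right _ _ _ h.1, hS₂.null_swap_right _ _ _ h.2⟩
  null_mul _ _ _ _ h := ⟨hS₁.null_mul _ _ _ _ h.1, hS₂.null_mul _ _ _ _ h.2⟩
  null_zero _ _ :=
    ⟨fun h => ext ((hS₁.null_zero _ _).mp h.1) ((hS₂.null_zero _ _).mp h.2),
      fun h => ⟨(hS₁.null_zero _ _).mpr (congrArg fst h), (hS₂.null_zero _ _).mpr (congrArg snd h)⟩⟩

theorem isHom_fst : (fiberProd hf₁ hf₂).IsHom S₁ fst :=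
  ⟨fun _ _ => rfl, rfl, rfl, fun _ => rfl, fun _ _ _ h => h.1⟩

theorem isHom_snd : (fiberProd hf₁ hf₂).IsHom S₂ snd :=
  ⟨fun _ _ => rfl, rfl, rfl, fun _ => rfl, fun _ _ _ h => h.2⟩

theorem isHom_lift {P' : Type*} {S' : PastureStr P'} {g₁ : P' → P₁} {g₂ : P' → P₂}
    (hg₁ : S'.IsHom S₁ g₁) (hg₂ : S'.IsHom S₂ g₂) (h : f₁ ∘ g₁ = f₂ ∘ g₂) :
    S'.IsHom (fiberProd hf₁ hf₂) (lift g₁ g₂ h) where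
  map_mul a b := ext (hg₁.map_mul a b) (hg₂.map_mul a b)
  map_zero := ext hg₁.map_zero hg₂.map_zero
  map_one := ext hg₁.map_one hg₂.map_one
  map_neg a := ext (hg₁.map_neg a) (hg₂.map_neg a)
  map_null a b c h := ⟨hg₁.map_null a b c h, hg₂.map_null a b c h⟩

end PastureStr

/-- **The category of pastures has fibered products.**
For pastures `P, P₁, P₂` and morphisms `f₁ : P₁ → P`, `f₂ : P₂ → P` there is a
pasture `Q` with morphisms `π₁ : Q → P₁`, `π₂ : Q → P₂` satisfying
`f₁ ∘ π₁ = f₂ ∘ π₂`, such that for every pasture `P'` with morphisms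
`g₁ : P' → P₁`, `g₂ : P' → P₂` with `f₁ ∘ g₁ = f₂ ∘ g₂` there is a unique
morphism `g : P' → Q` with `π₁ ∘ g = g₁` and `π₂ ∘ g = g₂`. -/
theorem pastures_have_fibered_products
    {P P₁ P₂ : Type u} (S : PastureStr P) (S₁ : PastureStr P₁) (S₂ : PastureStr P₂)
    (hS : S.IsPasture) (hS₁ : S₁.IsPasture) (hS₂ : S₂.IsPasture)
    (f₁ : P₁ → P) (f₂ : P₂ → P) (hf₁ : S₁.IsHom S f₁) (hf₂ : S₂.IsHom S f₂) :
    ∃ (Q : Type u) (SQ : PastureStr Q), SQ.IsPasture ∧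
      ∃ (π₁ : Q → P₁) (π₂ : Q → P₂),
        PastureStr.IsHom SQ S₁ π₁ ∧ PastureStr.IsHom SQ S₂ π₂ ∧
        f₁ ∘ π₁ = f₂ ∘ π₂ ∧
        ∀ (P' : Type v) (S' : PastureStr P'), S'.IsPasture →
          ∀ (g₁ : P' → P₁) (g₂ : P' → P₂),
            PastureStr.IsHom S' S₁ g₁ → PastureStr.IsHom S' S₂ g₂ →
            f₁ ∘ g₁ = f₂ ∘ g₂ →
            ∃! g : P' → Q,
              PastureStr.IsHom S' SQ g ∧ π₁ ∘ g = g₁ ∧ π₂ ∘ g = g₂ := by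
  open PastureStr FiberProd in
  exact ⟨FiberProd f₁ f₂, fiberProd hf₁ hf₂, isPasture_fiberProd hf₁ hf₂ hS hS₁ hS₂, fst, snd,
    isHom_fst hf₁ hf₂, isHom_snd hf₁ hf₂, comp_fst_eq_comp_snd,
    fun _ _ _ g₁ g₂ hg₁ hg₂ h => ⟨lift g₁ g₂ h, ⟨isHom_lift hf₁ hf₂ hg₁ hg₂ h, rfl, rfl⟩,
      fun _ ⟨_, h₁, h₂⟩ => hom_ext h₁ h₂⟩⟩
end

section
/- The category of pastures has fibered coproducts (pushouts): for any pastures P, P₁, P₂ and any morphisms of pastures f₁ : P → P₁ and f₂ : P → P₂, there exists a pasture Q together with morphisms of pastures i₁ : P₁ → Q and i₂ : P₂ → Q with i₁ ∘ f₁ = i₂ ∘ f₂, such that for every pasture P' with morphisms g₁ : P₁ → P' and g₂ : P₂ → P' satisfying g₁ ∘ f₁ = g₂ ∘ f₂ there is a unique morphism of pastures g : Q → P' with g ∘ i₁ = g₁ and g ∘ i₂ = g₂. -/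
universe u v w

/-! Nonzero elements of a pasture are units, so a pasture is a commutative group with zero
together with `-1` (and `-a = (-1) * a`) and a nullset. The pushout is therefore built on the
pushout of the unit groups, `Q = ((P₁ˣ × P₂ˣ) / {(f₁ a, (f₂ a)⁻¹)}) ∪ {0}`, with `-q = (-1) * q`
and with the smallest nullset that is closed under multiplication and contains the images of the
nullsets of `P₁` and `P₂`, namely the multiples `d • i₁(N₁)` and `d • i₂(N₂)`. Such a multiple
with last entry `0` has `d = 0` or comes from a triple `(a, -a, 0)`, which gives the axiom
`a + b + 0 = 0 ↔ a = -b`. Since `Q` is generated multiplicatively by `i₁(P₁)` and `i₂(P₂)`,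
a morphism out of `Q` is determined by its two restrictions. -/

structure Pasture where
  carrier : Type u
  str : PastureStr carrier
  isPasture : str.IsPasture

namespace Pasture

instance : CoeSort Pasture.{u} (Type u) := ⟨carrier⟩

/-- Unlike `⟨P, S, hS⟩.carrier`, which reduces to `P` during instance search,
`(Pasture.of S hS).carrier` is stuck, so the instances below apply to it. -/
def of {P : Type u} (S : PastureStr P) (hS : S.IsPasture) : Pasture.{u} := ⟨P, S, hS⟩

variable (X : Pasture.{u})

noncomputable instance : CommGroupWithZero X :=
  open Classical in
  have mul_comm := X.isPasture.mul_comm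
  { mul := X.str.mul
    one := X.str.one
    zero := X.str.zero
    mul_assoc := X.isPasture.mul_assoc
    one_mul := X.isPasture.one_mul
    mul_one a := (mul_comm _ _).trans (X.isPasture.one_mul a)
    zero_mul := X.isPasture.zero_mul
    mul_zero a := (mul_comm _ _).trans (X.isPasture.zero_mul a)
    mul_comm := mul_comm
    inv a := if ha : a = X.str.zero then X.str.zero else (X.isPasture.exists_inv a ha).choose
    exists_pair_ne := ⟨X.str.one, X.str.zero, X.isPasture.one_ne_zero⟩
    inv_zero := dif_pos rfl
    mul_inv_cancel a ha := by
      rw [dif_neg (show a ≠ X.str.zero from ha)]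
      exact (X.isPasture.exists_inv a ha).choose_spec }

variable {X}

theorem null_mul (d : X) {a b c : X} (h : X.str.null a b c) :
    X.str.null (d * a) (d * b) (d * c) :=
  X.isPasture.null_mul d a b c h

/-- Multiplying the null triple `(-1) + 1 + 0 = 0` by `a` gives `a * (-1) + a + 0 = 0`. -/
theorem str_neg_eq_mul (a : X) : X.str.neg a = a * X.str.neg 1 := by
  have h : X.str.null (a * X.str.neg 1) (a * 1) (a * 0) :=
    null_mul a ((X.isPasture.null_zero _ 1).2 rfl)
  rw [mul_one, mul_zero] at h
  exact ((X.isPasture.null_zero _ _).1 h).symm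

instance : HasDistribNeg X where
  neg := X.str.neg
  neg_neg := X.isPasture.neg_neg
  neg_mul a b := by
    show X.str.neg a * b = X.str.neg (a * b)
    rw [str_neg_eq_mul, str_neg_eq_mul (a * b), mul_right_comm]
  mul_neg a b := by
    show a * X.str.neg b = X.str.neg (a * b)
    rw [str_neg_eq_mul, str_neg_eq_mul (a * b), mul_assoc]

theorem null_zero_iff {a b : X} : X.str.null a b 0 ↔ a = -b :=
  X.isPasture.null_zero a b

theorem null_neg_one_one_zero : X.str.null (-1) 1 0 := null_zero_iff.2 rfl

variable {Y : Pasture.{v}}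

def _root_.PastureStr.IsHom.toMonoidWithZeroHom {f : X → Y} (hf : X.str.IsHom Y.str f) :
    X →*₀ Y where
  toFun := f
  map_zero' := hf.map_zero
  map_one' := hf.map_one
  map_mul' := hf.map_mul

theorem _root_.PastureStr.IsHom.map_neg_one {f : X → Y} (hf : X.str.IsHom Y.str f) : f (-1) = -1 :=
  (hf.map_neg 1).trans (congrArg Y.str.neg hf.map_one)

section ImageNull

variable {M : Type*} [CommMonoidWithZero M] (ι : Y →*₀ M)

def imageNull (q₁ q₂ q₃ : M) : Prop :=
  ∃ d a b c, Y.str.null a b c ∧ q₁ = d * ι a ∧ q₂ = d * ι b ∧ q₃ = d * ι c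

variable {ι}

theorem imageNull.swap_left {q₁ q₂ q₃ : M} (h : imageNull ι q₁ q₂ q₃) : imageNull ι q₂ q₁ q₃ :=
  let ⟨d, a, b, c, habc, h₁, h₂, h₃⟩ := h
  ⟨d, b, a, c, Y.isPasture.null_swap_left a b c habc, h₂, h₁, h₃⟩

theorem imageNull.swap_right {q₁ q₂ q₃ : M} (h : imageNull ι q₁ q₂ q₃) : imageNull ι q₁ q₃ q₂ :=
  let ⟨d, a, b, c, habc, h₁, h₂, h₃⟩ := h
  ⟨d, a, c, b, Y.isPasture.null_swap_right a b c habc, h₁, h₃, h₂⟩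

theorem imageNull.mul_left (e : M) {q₁ q₂ q₃ : M} (h : imageNull ι q₁ q₂ q₃) :
    imageNull ι (e * q₁) (e * q₂) (e * q₃) :=
  let ⟨d, a, b, c, habc, h₁, h₂, h₃⟩ := h
  ⟨e * d, a, b, c, habc, by rw [h₁, mul_assoc], by rw [h₂, mul_assoc], by rw [h₃, mul_assoc]⟩

theorem imageNull_of_null (a b c : Y) (h : Y.str.null a b c) : imageNull ι (ι a) (ι b) (ι c) :=
  ⟨1, a, b, c, h, (one_mul _).symm, (one_mul _).symm, (one_mul _).symm⟩

theorem imageNull_zero_iff [NoZeroDivisors M] [Nontrivial M] (q₁ q₂ : M) :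
    imageNull ι q₁ q₂ 0 ↔ q₁ = ι (-1) * q₂ := by
  constructor
  · rintro ⟨d, a, b, c, habc, rfl, rfl, h₀⟩
    rcases mul_eq_zero.1 h₀.symm with rfl | hc
    · simp
    · rw [map_eq_zero] at hc
      subst hc
      rw [null_zero_iff.1 habc, ← neg_one_mul, map_mul, mul_left_comm]
  · rintro rfl
    exact ⟨q₂, -1, 1, 0, null_neg_one_one_zero, mul_comm _ _, by simp, by simp⟩

theorem imageNull.map {Z : Pasture} (F : M →*₀ Z)
    (hF : ∀ a b c, Y.str.null a b c → Z.str.null (F (ι a)) (F (ι b)) (F (ι c)))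
    {q₁ q₂ q₃ : M} (h : imageNull ι q₁ q₂ q₃) : Z.str.null (F q₁) (F q₂) (F q₃) := by
  obtain ⟨d, a, b, c, habc, rfl, rfl, rfl⟩ := h
  simp only [map_mul]
  exact null_mul _ (hF a b c habc)

end ImageNull

section Pushout

variable {X : Pasture.{u}} {Y₁ : Pasture.{v}} {Y₂ : Pasture.{w}} (f₁ : X →*₀ Y₁) (f₂ : X →*₀ Y₂)

abbrev PushoutUnits : Type (max v w) :=
  (Y₁ˣ × Y₂ˣ) ⧸ ((Units.map (f₁ : X →* Y₁)).prod (Units.map (f₂ : X →* Y₂))⁻¹).range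

abbrev Pushout : Type (max v w) := WithZero (PushoutUnits f₁ f₂)

open Classical in
noncomputable def pushoutInl : Y₁ →*₀ Pushout f₁ f₂ :=
  (WithZero.map' ((QuotientGroup.mk' _).comp (MonoidHom.inl _ _))).comp
    (.ofClass WithZero.withZeroUnitsEquiv.symm)

open Classical in
noncomputable def pushoutInr : Y₂ →*₀ Pushout f₁ f₂ :=
  (WithZero.map' ((QuotientGroup.mk' _).comp (MonoidHom.inr _ _))).comp
    (.ofClass WithZero.withZeroUnitsEquiv.symm)

theorem pushoutInl_coe_unit (u : Y₁ˣ) :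
    pushoutInl f₁ f₂ u = ((QuotientGroup.mk (u, 1) : PushoutUnits f₁ f₂) : Pushout f₁ f₂) := by
  simp [pushoutInl]

theorem pushoutInr_coe_unit (u : Y₂ˣ) :
    pushoutInr f₁ f₂ u = ((QuotientGroup.mk (1, u) : PushoutUnits f₁ f₂) : Pushout f₁ f₂) := by
  simp [pushoutInr]

theorem pushout_condition (x : X) : pushoutInl f₁ f₂ (f₁ x) = pushoutInr f₁ f₂ (f₂ x) := by
  obtain rfl | ⟨a, rfl⟩ := GroupWithZero.eq_zero_or_unit x
  · simp only [map_zero]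
  · change pushoutInl f₁ f₂ (Units.map (f₁ : X →* Y₁) a) =
      pushoutInr f₁ f₂ (Units.map (f₂ : X →* Y₂) a)
    rw [pushoutInl_coe_unit, pushoutInr_coe_unit, WithZero.coe_inj, QuotientGroup.eq]
    exact ⟨a⁻¹, by simp⟩

theorem exists_eq_pushoutInl_mul_pushoutInr (q : Pushout f₁ f₂) :
    ∃ x y, q = pushoutInl f₁ f₂ x * pushoutInr f₁ f₂ y := by
  induction q using WithZero.recZeroCoe with
  | zero => exact ⟨0, 1, by rw [map_zero, zero_mul]⟩
  | coe g =>
    obtain ⟨⟨u, v⟩, rfl⟩ := QuotientGroup.mk_surjective g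
    refine ⟨u, v, ?_⟩
    rw [pushoutInl_coe_unit, pushoutInr_coe_unit, ← WithZero.coe_mul, ← QuotientGroup.mk_mul]
    simp

noncomputable def pushoutStr : PastureStr (Pushout f₁ f₂) where
  mul := (· * ·)
  zero := 0
  one := 1
  neg q := pushoutInl f₁ f₂ (-1) * q
  null q₁ q₂ q₃ := imageNull (pushoutInl f₁ f₂) q₁ q₂ q₃ ∨ imageNull (pushoutInr f₁ f₂) q₁ q₂ q₃

variable {f₁ f₂}

theorem pushoutInr_neg_one (hf₁ : f₁ (-1) = -1) (hf₂ : f₂ (-1) = -1) :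
    pushoutInr f₁ f₂ (-1) = pushoutInl f₁ f₂ (-1) := by
  rw [← hf₁, ← hf₂, pushout_condition]

theorem pushoutStr_isPasture (hf₁ : f₁ (-1) = -1) (hf₂ : f₂ (-1) = -1) :
    (pushoutStr f₁ f₂).IsPasture where
  mul_comm := mul_comm
  mul_assoc := mul_assoc
  one_mul := one_mul
  zero_mul := zero_mul
  one_ne_zero := one_ne_zero
  mul_ne_zero _ _ := mul_ne_zero
  exists_inv q hq := ⟨q⁻¹, mul_inv_cancel₀ hq⟩
  neg_neg q := by
    show pushoutInl f₁ f₂ (-1) * (pushoutInl f₁ f₂ (-1) * q) = q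
    rw [← mul_assoc, ← map_mul, neg_mul_neg, mul_one, map_one, one_mul]
  neg_zero := mul_zero _
  null_swap_left _ _ _ := Or.imp imageNull.swap_left imageNull.swap_left
  null_swap_right _ _ _ := Or.imp imageNull.swap_right imageNull.swap_right
  null_mul d _ _ _ := Or.imp (imageNull.mul_left d) (imageNull.mul_left d)
  null_zero q₁ q₂ := by
    show imageNull _ q₁ q₂ 0 ∨ imageNull _ q₁ q₂ 0 ↔ q₁ = pushoutInl f₁ f₂ (-1) * q₂
    rw [imageNull_zero_iff, imageNull_zero_iff, pushoutInr_neg_one hf₁ hf₂, or_self]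

theorem isHom_pushoutInl : Y₁.str.IsHom (pushoutStr f₁ f₂) (pushoutInl f₁ f₂) where
  map_mul := map_mul _
  map_zero := map_zero _
  map_one := map_one _
  map_neg a := by
    show pushoutInl f₁ f₂ (-a) = pushoutInl f₁ f₂ (-1) * pushoutInl f₁ f₂ a
    rw [← map_mul, neg_one_mul]
  map_null a b c h := Or.inl (imageNull_of_null a b c h)

theorem isHom_pushoutInr (hf₁ : f₁ (-1) = -1) (hf₂ : f₂ (-1) = -1) :
    Y₂.str.IsHom (pushoutStr f₁ f₂) (pushoutInr f₁ f₂) where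
  map_mul := map_mul _
  map_zero := map_zero _
  map_one := map_one _
  map_neg a := by
    show pushoutInr f₁ f₂ (-a) = pushoutInl f₁ f₂ (-1) * pushoutInr f₁ f₂ a
    rw [← pushoutInr_neg_one hf₁ hf₂, ← map_mul, neg_one_mul]
  map_null a b c h := Or.inr (imageNull_of_null a b c h)

section Desc

variable {M : Type*} [CommMonoidWithZero M] (g₁ : Y₁ →*₀ M) (g₂ : Y₂ →*₀ M)
  (h : ∀ x, g₁ (f₁ x) = g₂ (f₂ x))

noncomputable def pushoutDesc : Pushout f₁ f₂ →*₀ M :=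
  WithZero.lift' <| QuotientGroup.lift _
    ((g₁.toMonoidHom.comp (Units.coeHom Y₁)).coprod (g₂.toMonoidHom.comp (Units.coeHom Y₂))) <| by
      rintro _ ⟨a, rfl⟩
      change g₁ (f₁ a) * g₂ (f₂ ↑a⁻¹) = 1
      rw [h, ← map_mul, ← map_mul, Units.mul_inv, map_one, map_one]

theorem pushoutDesc_inl (x : Y₁) : pushoutDesc g₁ g₂ h (pushoutInl f₁ f₂ x) = g₁ x := by
  obtain rfl | ⟨u, rfl⟩ := GroupWithZero.eq_zero_or_unit x
  · simp only [map_zero]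
  · simp [pushoutInl_coe_unit, pushoutDesc]

theorem pushoutDesc_inr (y : Y₂) : pushoutDesc g₁ g₂ h (pushoutInr f₁ f₂ y) = g₂ y := by
  obtain rfl | ⟨u, rfl⟩ := GroupWithZero.eq_zero_or_unit y
  · simp only [map_zero]
  · simp [pushoutInr_coe_unit, pushoutDesc]

end Desc

theorem isHom_pushoutDesc {Z : Pasture} {g₁ : Y₁ →*₀ Z} {g₂ : Y₂ →*₀ Z}
    (hg₁ : Y₁.str.IsHom Z.str g₁) (hg₂ : Y₂.str.IsHom Z.str g₂) (h : ∀ x, g₁ (f₁ x) = g₂ (f₂ x)) :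
    (pushoutStr f₁ f₂).IsHom Z.str (pushoutDesc g₁ g₂ h) where
  map_mul := map_mul _
  map_zero := map_zero _
  map_one := map_one _
  map_neg q := by
    show pushoutDesc _ _ h (pushoutInl f₁ f₂ (-1) * q) = -pushoutDesc _ _ h q
    rw [map_mul, pushoutDesc_inl, hg₁.map_neg_one, neg_one_mul]
  map_null _ _ _ := Or.rec
    (imageNull.map _ fun a b c habc => by
      rw [pushoutDesc_inl, pushoutDesc_inl, pushoutDesc_inl]
      exact hg₁.map_null a b c habc)
    (imageNull.map _ fun a b c habc => by
      rw [pushoutDesc_inr, pushoutDesc_inr, pushoutDesc_inr]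
      exact hg₂.map_null a b c habc)

theorem pushout_ext_of_map_mul {N : Type*} [Mul N] {g g' : Pushout f₁ f₂ → N}
    (hg : ∀ p q, g (p * q) = g p * g q) (hg' : ∀ p q, g' (p * q) = g' p * g' q)
    (h₁ : ∀ x, g (pushoutInl f₁ f₂ x) = g' (pushoutInl f₁ f₂ x))
    (h₂ : ∀ y, g (pushoutInr f₁ f₂ y) = g' (pushoutInr f₁ f₂ y)) : g = g' := by
  funext q
  obtain ⟨x, y, rfl⟩ := exists_eq_pushoutInl_mul_pushoutInr f₁ f₂ q
  rw [hg, hg', h₁, h₂]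

end Pushout

end Pasture

open Pasture in
/-- **The category of pastures has fibered coproducts.**
For pastures `P, P₁, P₂` and morphisms `f₁ : P → P₁`, `f₂ : P → P₂` there is a
pasture `Q` with morphisms `i₁ : P₁ → Q`, `i₂ : P₂ → Q` satisfying
`i₁ ∘ f₁ = i₂ ∘ f₂`, such that for every pasture `P'` with morphisms
`g₁ : P₁ → P'`, `g₂ : P₂ → P'` with `g₁ ∘ f₁ = g₂ ∘ f₂` there is a unique
morphism `g : Q → P'` with `g ∘ i₁ = g₁` and `g ∘ i₂ = g₂`. -/
theorem pastures_have_fibered_coproducts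
    {P P₁ P₂ : Type u} (S : PastureStr P) (S₁ : PastureStr P₁) (S₂ : PastureStr P₂)
    (hS : S.IsPasture) (hS₁ : S₁.IsPasture) (hS₂ : S₂.IsPasture)
    (f₁ : P → P₁) (f₂ : P → P₂) (hf₁ : S.IsHom S₁ f₁) (hf₂ : S.IsHom S₂ f₂) :
    ∃ (Q : Type u) (SQ : PastureStr Q), SQ.IsPasture ∧
      ∃ (i₁ : P₁ → Q) (i₂ : P₂ → Q),
        PastureStr.IsHom S₁ SQ i₁ ∧ PastureStr.IsHom S₂ SQ i₂ ∧
        i₁ ∘ f₁ = i₂ ∘ f₂ ∧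
        ∀ (P' : Type v) (S' : PastureStr P'), S'.IsPasture →
          ∀ (g₁ : P₁ → P') (g₂ : P₂ → P'),
            PastureStr.IsHom S₁ S' g₁ → PastureStr.IsHom S₂ S' g₂ →
            g₁ ∘ f₁ = g₂ ∘ f₂ →
            ∃! g : Q → P',
              PastureStr.IsHom SQ S' g ∧ g ∘ i₁ = g₁ ∧ g ∘ i₂ = g₂ := by
  let X := Pasture.of S hS
  let F₁ := PastureStr.IsHom.toMonoidWithZeroHom (X := X) (Y := .of S₁ hS₁) hf₁
  let F₂ := PastureStr.IsHom.toMonoidWithZeroHom (X := X) (Y := .of S₂ hS₂) hf₂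
  have hF₁ : F₁ (-1) = -1 := PastureStr.IsHom.map_neg_one (X := X) (Y := .of S₁ hS₁) hf₁
  have hF₂ : F₂ (-1) = -1 := PastureStr.IsHom.map_neg_one (X := X) (Y := .of S₂ hS₂) hf₂
  refine ⟨Pushout F₁ F₂, pushoutStr F₁ F₂, pushoutStr_isPasture hF₁ hF₂, pushoutInl F₁ F₂,
    pushoutInr F₁ F₂, isHom_pushoutInl (f₁ := F₁) (f₂ := F₂), isHom_pushoutInr hF₁ hF₂,
    funext (pushout_condition F₁ F₂), fun P' S' hS' g₁ g₂ hg₁ hg₂ hg => ?_⟩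
  let G₁ := PastureStr.IsHom.toMonoidWithZeroHom (X := .of S₁ hS₁) (Y := .of S' hS') hg₁
  let G₂ := PastureStr.IsHom.toMonoidWithZeroHom (X := .of S₂ hS₂) (Y := .of S' hS') hg₂
  refine ⟨pushoutDesc G₁ G₂ (congrFun hg), ⟨isHom_pushoutDesc (g₁ := G₁) (g₂ := G₂) hg₁ hg₂ _,
    funext (pushoutDesc_inl G₁ G₂ _), funext (pushoutDesc_inr G₁ G₂ _)⟩, fun g ⟨hg, hgl, hgr⟩ => ?_⟩
  exact pushout_ext_of_map_mul (N := Pasture.of S' hS') hg.map_mul (map_mul _)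
    (fun x => (congrFun hgl x).trans (pushoutDesc_inl G₁ G₂ _ x).symm)
    (fun y => (congrFun hgr y).trans (pushoutDesc_inr G₁ G₂ _ y).symm)
end

section
/- The category of pastures has equalizers: for any pastures P₁, P₂ and any morphisms of pastures f, g : P₁ → P₂, there exists a pasture Q together with a morphism of pastures q : Q → P₁ with f ∘ q = g ∘ q, such that for every pasture Q' with a morphism q' : Q' → P₁ satisfying f ∘ q' = g ∘ q' there is a unique morphism of pastures u : Q' → Q with q ∘ u = q'. -/
/-!
The equalizer of `f, g : P₁ → P₂` is the locus `{x | f x = g x}` with the structure of `P₁`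
restricted to it. This locus is closed under all pasture operations, including inverses because
inverses in `P₂` are unique; a morphism equalizing `f` and `g` lands in it and hence factors,
uniquely since the inclusion is injective.
-/

universe u v w

namespace PastureStr

variable {P : Type u} {S : PastureStr P}

theorem IsPasture.eq_of_mul_eq_one (hS : S.IsPasture) {a b c : P}
    (hb : S.mul a b = S.one) (hc : S.mul a c = S.one) : b = c :=
  calc b = S.mul (S.mul a c) b := by rw [hc, hS.one_mul]
    _ = S.mul (S.mul a b) c := by
        rw [hS.mul_assoc, hS.mul_comm c b, ← hS.mul_assoc]
    _ = c := by rw [hb, hS.one_mul]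

/-- Closure under inverses is stated for every right inverse; in a pasture there is only one. -/
structure IsSubpasture (S : PastureStr P) (s : Set P) : Prop where
  zero_mem : S.zero ∈ s
  one_mem : S.one ∈ s
  mul_mem : ∀ {a b : P}, a ∈ s → b ∈ s → S.mul a b ∈ s
  neg_mem : ∀ {a : P}, a ∈ s → S.neg a ∈ s
  inv_mem : ∀ {a b : P}, a ∈ s → S.mul a b = S.one → b ∈ s

def subpasture (S : PastureStr P) {s : Set P} (hs : S.IsSubpasture s) : PastureStr s where
  mul a b := ⟨S.mul a b, hs.mul_mem a.2 b.2⟩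
  zero := ⟨S.zero, hs.zero_mem⟩
  one := ⟨S.one, hs.one_mem⟩
  neg a := ⟨S.neg a, hs.neg_mem a.2⟩
  null a b c := S.null a b c

variable {s : Set P} (hs : S.IsSubpasture s)

theorem IsPasture.subpasture (hS : S.IsPasture) : (S.subpasture hs).IsPasture where
  mul_comm a b := Subtype.ext (hS.mul_comm a b)
  mul_assoc a b c := Subtype.ext (hS.mul_assoc a b c)
  one_mul a := Subtype.ext (hS.one_mul a)
  zero_mul a := Subtype.ext (hS.zero_mul a)
  one_ne_zero h := hS.one_ne_zero (congrArg Subtype.val h)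
  mul_ne_zero a b ha hb h := hS.mul_ne_zero a b (fun h' => ha (Subtype.ext h'))
    (fun h' => hb (Subtype.ext h')) (congrArg Subtype.val h)
  exists_inv a ha := by
    obtain ⟨b, hb⟩ := hS.exists_inv a fun h => ha (Subtype.ext h)
    exact ⟨⟨b, hs.inv_mem a.2 hb⟩, Subtype.ext hb⟩
  neg_neg a := Subtype.ext (hS.neg_neg a)
  neg_zero := Subtype.ext hS.neg_zero
  null_swap_left a b c := hS.null_swap_left a b c
  null_swap_right a b c := hS.null_swap_right a b c
  null_mul d a b c := hS.null_mul d a b c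
  null_zero a b := ⟨fun h => Subtype.ext ((hS.null_zero a b).1 h),
    fun h => (hS.null_zero a b).2 (congrArg Subtype.val h)⟩

theorem isHom_subtype_val : (S.subpasture hs).IsHom S Subtype.val where
  map_mul _ _ := rfl
  map_zero := rfl
  map_one := rfl
  map_neg _ := rfl
  map_null _ _ _ h := h

theorem IsHom.codRestrict {Q : Type v} {T : PastureStr Q} {q : Q → P} (hq : T.IsHom S q)
    (h : ∀ x, q x ∈ s) : T.IsHom (S.subpasture hs) (Set.codRestrict q s h) where
  map_mul a b := Subtype.ext (hq.map_mul a b)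
  map_zero := Subtype.ext hq.map_zero
  map_one := Subtype.ext hq.map_one
  map_neg a := Subtype.ext (hq.map_neg a)
  map_null a b c := hq.map_null a b c

end PastureStr

theorem PastureStr.IsHom.isSubpasture_eqLocus {P₁ : Type u} {P₂ : Type v}
    {S₁ : PastureStr P₁} {S₂ : PastureStr P₂} (hS₂ : S₂.IsPasture) {f g : P₁ → P₂}
    (hf : S₁.IsHom S₂ f) (hg : S₁.IsHom S₂ g) : S₁.IsSubpasture {x | f x = g x} where
  zero_mem := hf.map_zero.trans hg.map_zero.symm
  one_mem := hf.map_one.trans hg.map_one.symm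
  mul_mem {a b} ha hb := show f _ = g _ by rw [hf.map_mul, hg.map_mul, ha.out, hb.out]
  neg_mem {a} ha := show f _ = g _ by rw [hf.map_neg, hg.map_neg, ha.out]
  inv_mem {a b} ha hb := hS₂.eq_of_mul_eq_one
    (by rw [← hf.map_mul, hb, hf.map_one]) (by rw [ha.out, ← hg.map_mul, hb, hg.map_one])

/-- **The category of pastures has equalizers.**
For pastures `P₁, P₂` and morphisms `f, g : P₁ → P₂` there is a pasture `Q`
with a morphism `q : Q → P₁` satisfying `f ∘ q = g ∘ q`, such that for every
pasture `Q'` with a morphism `q' : Q' → P₁` satisfying `f ∘ q' = g ∘ q'`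
there is a unique morphism `u : Q' → Q` with `q ∘ u = q'`. -/
theorem pastures_have_equalizers
    {P₁ P₂ : Type u} (S₁ : PastureStr P₁) (S₂ : PastureStr P₂)
    (hS₁ : S₁.IsPasture) (hS₂ : S₂.IsPasture)
    (f g : P₁ → P₂) (hf : S₁.IsHom S₂ f) (hg : S₁.IsHom S₂ g) :
    ∃ (Q : Type u) (SQ : PastureStr Q), SQ.IsPasture ∧
      ∃ q : Q → P₁, PastureStr.IsHom SQ S₁ q ∧ f ∘ q = g ∘ q ∧
        ∀ (Q' : Type v) (S' : PastureStr Q'), S'.IsPasture →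
          ∀ q' : Q' → P₁, PastureStr.IsHom S' S₁ q' → f ∘ q' = g ∘ q' →
            ∃! u : Q' → Q, PastureStr.IsHom S' SQ u ∧ q ∘ u = q' := by
  have hs := hf.isSubpasture_eqLocus hS₂ hg
  refine ⟨_, S₁.subpasture hs, hS₁.subpasture hs, Subtype.val,
    PastureStr.isHom_subtype_val hs, funext fun x => x.2, ?_⟩
  intro Q' S' _ q' hq' hfg
  have hmem : ∀ x, q' x ∈ {x | f x = g x} := fun x => congrFun hfg x
  refine ⟨Set.codRestrict q' _ hmem, ⟨hq'.codRestrict hs hmem, rfl⟩, ?_⟩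
  rintro u ⟨-, rfl⟩
  rfl
end

section
/- The category of pastures has coequalizers: for any pastures P₁, P₂ and any morphisms of pastures f, g : P₁ → P₂, there exists a pasture Q together with a morphism of pastures q : P₂ → Q with q ∘ f = q ∘ g, such that for every pasture Q' with a morphism q' : P₂ → Q' satisfying q' ∘ f = q' ∘ g there is a unique morphism of pastures u : Q → Q' with u ∘ q = q'. -/
universe u v w

/-!
The coequalizer is the quotient of `P₂` by the multiplicative congruence generated by
`f x ~ g x`, with nullset the image of the nullset of `P₂`. Morphisms of pastures reflect
zero (a unit cannot map to `0`), so the class of `0` is `{0}`; this is what keeps `1 ≠ 0`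
and `a + b + 0 = 0 ↔ a = -b` in the quotient.
-/

namespace PastureStr

section Basic

variable {P : Type u} {P' : Type v} {S : PastureStr P} {T : PastureStr P'}

theorem IsPasture.mul_zero (hS : S.IsPasture) (a : P) : S.mul a S.zero = S.zero := by
  rw [hS.mul_comm, hS.zero_mul]

theorem IsPasture.mul_eq_zero_iff (hS : S.IsPasture) {a b : P} :
    S.mul a b = S.zero ↔ a = S.zero ∨ b = S.zero := by
  refine ⟨fun h => ?_, ?_⟩
  · by_contra! hab
    exact hS.mul_ne_zero a b hab.1 hab.2 h
  · rintro (rfl | rfl)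
    · exact hS.zero_mul b
    · exact hS.mul_zero a

theorem IsPasture.neg_eq_mul_neg_one (hS : S.IsPasture) (a : P) :
    S.neg a = S.mul a (S.neg S.one) := by
  have hnull : S.null S.one (S.neg S.one) S.zero :=
    (hS.null_zero _ _).mpr (hS.neg_neg _).symm
  have hnull_a := hS.null_mul a _ _ _ hnull
  rw [hS.mul_comm a S.one, hS.one_mul, hS.mul_zero] at hnull_a
  simpa only [hS.neg_neg] using congrArg S.neg ((hS.null_zero _ _).mp hnull_a)

theorem IsHom.eq_zero_iff (hS : S.IsPasture) (hT : T.IsPasture) {f : P → P'}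
    (hf : S.IsHom T f) {x : P} : f x = T.zero ↔ x = S.zero := by
  refine ⟨fun hfx => ?_, fun hx => hx ▸ hf.map_zero⟩
  by_contra hx
  obtain ⟨y, hxy⟩ := hS.exists_inv x hx
  have h := congrArg f hxy
  rw [hf.map_mul, hf.map_one, hfx, hT.zero_mul] at h
  exact hT.one_ne_zero h.symm

end Basic

section Coequalizer

variable {X : Type u} {P : Type v} {S : PastureStr P} {f g : X → P}

variable (S f g) in
inductive CoeqRel : P → P → Prop
  | of (x : X) : CoeqRel (f x) (g x)
  | refl (a : P) : CoeqRel a a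
  | symm {a b : P} : CoeqRel a b → CoeqRel b a
  | trans {a b c : P} : CoeqRel a b → CoeqRel b c → CoeqRel a c
  | mul_left (d : P) {a b : P} : CoeqRel a b → CoeqRel (S.mul d a) (S.mul d b)

variable (S f g) in
def coeqSetoid : Setoid P :=
  ⟨CoeqRel S f g, ⟨CoeqRel.refl, CoeqRel.symm, CoeqRel.trans⟩⟩

theorem CoeqRel.mul (hS : S.IsPasture) {a b c d : P} (hab : CoeqRel S f g a b)
    (hcd : CoeqRel S f g c d) : CoeqRel S f g (S.mul a c) (S.mul b d) := by
  refine (hcd.mul_left a).trans ?_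
  rw [hS.mul_comm a d, hS.mul_comm b d]
  exact hab.mul_left d

theorem CoeqRel.neg (hS : S.IsPasture) {a b : P} (h : CoeqRel S f g a b) :
    CoeqRel S f g (S.neg a) (S.neg b) := by
  rw [hS.neg_eq_mul_neg_one a, hS.neg_eq_mul_neg_one b, hS.mul_comm a, hS.mul_comm b]
  exact h.mul_left _

theorem CoeqRel.eq_zero_iff {S₀ : PastureStr X} (hS₀ : S₀.IsPasture) (hS : S.IsPasture)
    (hf : S₀.IsHom S f) (hg : S₀.IsHom S g) {a b : P} (h : CoeqRel S f g a b) :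
    a = S.zero ↔ b = S.zero := by
  induction h with
  | of x => rw [hf.eq_zero_iff hS₀ hS, hg.eq_zero_iff hS₀ hS]
  | refl a => rfl
  | symm _ ih => exact ih.symm
  | trans _ _ ih₁ ih₂ => exact ih₁.trans ih₂
  | mul_left d _ ih => rw [hS.mul_eq_zero_iff, hS.mul_eq_zero_iff, ih]

theorem CoeqRel.map_eq {Y : Type w} {T : PastureStr Y} {q : P → Y}
    (hq : ∀ a b, q (S.mul a b) = T.mul (q a) (q b)) (hqfg : q ∘ f = q ∘ g) {a b : P}
    (h : CoeqRel S f g a b) : q a = q b := by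
  induction h with
  | of x => exact congrFun hqfg x
  | refl a => rfl
  | symm _ ih => exact ih.symm
  | trans _ _ ih₁ ih₂ => exact ih₁.trans ih₂
  | mul_left d _ ih => rw [hq, hq, ih]

variable (S f g) in
abbrev Coeq : Type v := Quotient (coeqSetoid S f g)

def coeqStr (hS : S.IsPasture) : PastureStr (Coeq S f g) where
  mul := Quotient.map₂ S.mul fun _ _ hab _ _ hcd => CoeqRel.mul hS hab hcd
  zero := ⟦S.zero⟧
  one := ⟦S.one⟧
  neg := Quotient.map S.neg fun _ _ => CoeqRel.neg hS
  null x y z := ∃ a b c, x = ⟦a⟧ ∧ y = ⟦b⟧ ∧ z = ⟦c⟧ ∧ S.null a b c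

theorem mk_eq_zero_iff {S₀ : PastureStr X} (hS₀ : S₀.IsPasture) (hS : S.IsPasture)
    (hf : S₀.IsHom S f) (hg : S₀.IsHom S g) {a : P} :
    (⟦a⟧ : Coeq S f g) = (coeqStr hS).zero ↔ a = S.zero :=
  ⟨fun h => (CoeqRel.eq_zero_iff hS₀ hS hf hg (Quotient.exact h)).mpr rfl,
    fun h => h ▸ rfl⟩

theorem coeqStr_null_zero {S₀ : PastureStr X} (hS₀ : S₀.IsPasture) (hS : S.IsPasture)
    (hf : S₀.IsHom S f) (hg : S₀.IsHom S g) (x y : Coeq S f g) :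
    (coeqStr hS).null x y (coeqStr hS).zero ↔ x = (coeqStr hS).neg y := by
  constructor
  · rintro ⟨a, b, c, rfl, rfl, hc, hnull⟩
    obtain rfl := (mk_eq_zero_iff hS₀ hS hf hg).mp hc.symm
    rw [(hS.null_zero a b).mp hnull]
    rfl
  · induction y using Quotient.ind with | _ b => ?_
    rintro rfl
    exact ⟨S.neg b, b, S.zero, rfl, rfl, rfl, (hS.null_zero _ _).mpr rfl⟩

theorem coeqStr_isPasture {S₀ : PastureStr X} (hS₀ : S₀.IsPasture) (hS : S.IsPasture)
    (hf : S₀.IsHom S f) (hg : S₀.IsHom S g) : (coeqStr (f := f) (g := g) hS).IsPasture where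
  mul_comm := by
    rintro ⟨a⟩ ⟨b⟩
    exact congrArg _ (hS.mul_comm a b)
  mul_assoc := by
    rintro ⟨a⟩ ⟨b⟩ ⟨c⟩
    exact congrArg _ (hS.mul_assoc a b c)
  one_mul := by
    rintro ⟨a⟩
    exact congrArg _ (hS.one_mul a)
  zero_mul := by
    rintro ⟨a⟩
    exact congrArg _ (hS.zero_mul a)
  one_ne_zero h := hS.one_ne_zero ((mk_eq_zero_iff hS₀ hS hf hg).mp h)
  mul_ne_zero := by
    refine Quotient.ind₂ fun a b ha hb hab => ?_
    rw [Ne, mk_eq_zero_iff hS₀ hS hf hg] at ha hb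
    exact hS.mul_ne_zero a b ha hb ((mk_eq_zero_iff hS₀ hS hf hg).mp hab)
  exists_inv := by
    rintro ⟨a⟩ ha
    obtain ⟨b, hab⟩ := hS.exists_inv a (mt (mk_eq_zero_iff hS₀ hS hf hg).mpr ha)
    exact ⟨⟦b⟧, congrArg _ hab⟩
  neg_neg := by
    rintro ⟨a⟩
    exact congrArg _ (hS.neg_neg a)
  neg_zero := congrArg _ hS.neg_zero
  null_swap_left := by
    rintro _ _ _ ⟨a, b, c, rfl, rfl, rfl, h⟩
    exact ⟨b, a, c, rfl, rfl, rfl, hS.null_swap_left _ _ _ h⟩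
  null_swap_right := by
    rintro _ _ _ ⟨a, b, c, rfl, rfl, rfl, h⟩
    exact ⟨a, c, b, rfl, rfl, rfl, hS.null_swap_right _ _ _ h⟩
  null_mul := by
    rintro ⟨d⟩ _ _ _ ⟨a, b, c, rfl, rfl, rfl, h⟩
    exact ⟨_, _, _, rfl, rfl, rfl, hS.null_mul d _ _ _ h⟩
  null_zero := coeqStr_null_zero hS₀ hS hf hg

theorem isHom_coeq_mk (hS : S.IsPasture) :
    S.IsHom (coeqStr (f := f) (g := g) hS) (fun a => ⟦a⟧) where
  map_mul _ _ := rfl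
  map_zero := rfl
  map_one := rfl
  map_neg _ := rfl
  map_null a b c h := ⟨a, b, c, rfl, rfl, rfl, h⟩

theorem coeq_mk_comp_eq : (fun a => (⟦a⟧ : Coeq S f g)) ∘ f = (fun a => ⟦a⟧) ∘ g :=
  funext fun x => Quotient.sound (CoeqRel.of x)

theorem isHom_coeq_lift (hS : S.IsPasture) {Y : Type w} {T : PastureStr Y} {q : P → Y}
    (hq : S.IsHom T q) (hqfg : q ∘ f = q ∘ g) :
    (coeqStr hS).IsHom T (Quotient.lift (s := coeqSetoid S f g) q
      fun _ _ => CoeqRel.map_eq hq.map_mul hqfg) where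
  map_mul := by
    rintro ⟨a⟩ ⟨b⟩
    exact hq.map_mul a b
  map_zero := hq.map_zero
  map_one := hq.map_one
  map_neg := by
    rintro ⟨a⟩
    exact hq.map_neg a
  map_null := by
    rintro _ _ _ ⟨a, b, c, rfl, rfl, rfl, h⟩
    exact hq.map_null a b c h

end Coequalizer

end PastureStr

open PastureStr in
/-- **The category of pastures has coequalizers.**
For pastures `P₁, P₂` and morphisms `f, g : P₁ → P₂` there is a pasture `Q`
with a morphism `q : P₂ → Q` satisfying `q ∘ f = q ∘ g`, such that for every
pasture `Q'` with a morphism `q' : P₂ → Q'` satisfying `q' ∘ f = q' ∘ g`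
there is a unique morphism `u : Q → Q'` with `u ∘ q = q'`. -/
theorem pastures_have_coequalizers
    {P₁ P₂ : Type u} (S₁ : PastureStr P₁) (S₂ : PastureStr P₂)
    (hS₁ : S₁.IsPasture) (hS₂ : S₂.IsPasture)
    (f g : P₁ → P₂) (hf : S₁.IsHom S₂ f) (hg : S₁.IsHom S₂ g) :
    ∃ (Q : Type u) (SQ : PastureStr Q), SQ.IsPasture ∧
      ∃ q : P₂ → Q, PastureStr.IsHom S₂ SQ q ∧ q ∘ f = q ∘ g ∧
        ∀ (Q' : Type v) (S' : PastureStr Q'), S'.IsPasture →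
          ∀ q' : P₂ → Q', PastureStr.IsHom S₂ S' q' → q' ∘ f = q' ∘ g →
            ∃! u : Q → Q', PastureStr.IsHom SQ S' u ∧ u ∘ q = q' := by
  refine ⟨Coeq S₂ f g, coeqStr hS₂, coeqStr_isPasture hS₁ hS₂ hf hg, fun a => ⟦a⟧,
    isHom_coeq_mk hS₂, coeq_mk_comp_eq, fun Q' S' _ q' hq' hq'fg => ?_⟩
  refine ⟨_, ⟨isHom_coeq_lift hS₂ hq' hq'fg, rfl⟩, fun u ⟨_, hu⟩ => ?_⟩
  funext x
  induction x using Quotient.ind with | _ a => exact congrFun hu a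
end

section
/- The category of pastures has arbitrary products: for any index set I and any family of pastures (P_i)_{i ∈ I}, there exists a pasture Q together with morphisms of pastures π_j : Q → P_j for each j ∈ I, such that for every pasture P' with morphisms f_i : P' → P_i for each i ∈ I there is a unique morphism of pastures f : P' → Q with π_j ∘ f = f_j for all j ∈ I. -/
universe u v w

/-!
The product is `{0} ⊔ ∏ i, (P i)ˣ`: tuples that are zero in every coordinate or in none, with
componentwise operations and nullset. A morphism of pastures sends `0` to `0` and units to units,
so the tuple `(f i p)ᵢ` lies in the product, and a morphism into the product is determined by its
components. Each element also carries a flag recording whether it is nonzero, with the nullset of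
the Krasner hyperfield on flags: the flag is redundant when `I` is nonempty, but it makes the empty
product the Krasner hyperfield, which is the terminal pasture.
-/

namespace PastureStr

variable {P : Type u} {S : PastureStr P}

namespace IsPasture

variable (h : S.IsPasture)
include h

theorem mul_zero_s4 (a : P) : S.mul a S.zero = S.zero := by
  rw [h.mul_comm, h.zero_mul]

theorem mul_ne_zero_iff {a b : P} : S.mul a b ≠ S.zero ↔ a ≠ S.zero ∧ b ≠ S.zero := by
  refine ⟨fun hab => ⟨?_, ?_⟩, fun ⟨ha, hb⟩ => h.mul_ne_zero a b ha hb⟩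
  · rintro rfl
    exact hab (h.zero_mul b)
  · rintro rfl
    exact hab (h.mul_zero_s4 a)

theorem neg_ne_zero_iff {a : P} : S.neg a ≠ S.zero ↔ a ≠ S.zero := by
  refine not_congr ⟨fun ha => ?_, fun ha => ?_⟩
  · rw [← h.neg_neg a, ha, h.neg_zero]
  · rw [ha, h.neg_zero]

theorem ne_zero_or_ne_zero_of_null {a b c : P} (hn : S.null a b c) (ha : a ≠ S.zero) :
    b ≠ S.zero ∨ c ≠ S.zero := by
  by_contra! hbc
  rw [hbc.1, hbc.2, h.null_zero, h.neg_zero] at hn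
  exact ha hn

end IsPasture

theorem IsHom.map_ne_zero_iff {P' : Type v} {T : PastureStr P'} {f : P → P'}
    (hS : S.IsPasture) (hT : T.IsPasture) (hf : S.IsHom T f) {a : P} :
    f a ≠ T.zero ↔ a ≠ S.zero := by
  refine ⟨fun hfa ha => hfa (ha ▸ hf.map_zero), fun ha hfa => ?_⟩
  obtain ⟨b, hab⟩ := hS.exists_inv a ha
  have : T.mul (f a) (f b) = T.one := by rw [← hf.map_mul, hab, hf.map_one]
  rw [hfa, hT.zero_mul] at this
  exact hT.one_ne_zero this.symm

end PastureStr

/-- The nullset of the Krasner hyperfield `{0, 1}`, with `true` standing for `1`. -/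
def KrasnerNull (a b c : Bool) : Prop :=
  (a → b ∨ c) ∧ (b → a ∨ c) ∧ (c → a ∨ b)

theorem krasnerNull_swap_left : ∀ a b c, KrasnerNull a b c → KrasnerNull b a c := by
  unfold KrasnerNull; decide

theorem krasnerNull_swap_right : ∀ a b c, KrasnerNull a b c → KrasnerNull a c b := by
  unfold KrasnerNull; decide

theorem krasnerNull_and_left :
    ∀ d a b c, KrasnerNull a b c → KrasnerNull (d && a) (d && b) (d && c) := by
  unfold KrasnerNull; decide

theorem krasnerNull_false_iff : ∀ a b, KrasnerNull a b false ↔ a = b := by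
  unfold KrasnerNull; decide

theorem PastureStr.IsPasture.krasnerNull_of_null {P : Type u} {S : PastureStr P}
    [DecidableEq P] (h : S.IsPasture) {a b c : P} (hn : S.null a b c) :
    KrasnerNull (decide (a ≠ S.zero)) (decide (b ≠ S.zero)) (decide (c ≠ S.zero)) := by
  simp only [KrasnerNull, decide_eq_true_eq]
  exact ⟨h.ne_zero_or_ne_zero_of_null hn,
    h.ne_zero_or_ne_zero_of_null (h.null_swap_left _ _ _ hn),
    h.ne_zero_or_ne_zero_of_null (h.null_swap_left _ _ _ (h.null_swap_right _ _ _ hn))⟩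

@[ext]
structure PastureProd {I : Type v} {P : I → Type u} (S : ∀ i, PastureStr (P i)) where
  isUnit : Bool
  val : ∀ i, P i
  isUnit_iff : ∀ i, isUnit = true ↔ val i ≠ (S i).zero

namespace PastureProd

variable {I : Type v} {P : I → Type u} {S : ∀ i, PastureStr (P i)} (hS : ∀ i, (S i).IsPasture)

def str : PastureStr (PastureProd S) where
  mul a b := ⟨a.isUnit && b.isUnit, fun i => (S i).mul (a.val i) (b.val i), fun i => by
    rw [Bool.and_eq_true, a.isUnit_iff, b.isUnit_iff, (hS i).mul_ne_zero_iff]⟩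
  zero := ⟨false, fun i => (S i).zero, fun i => by simp⟩
  one := ⟨true, fun i => (S i).one, fun i => iff_of_true rfl (hS i).one_ne_zero⟩
  neg a := ⟨a.isUnit, fun i => (S i).neg (a.val i), fun i => by
    rw [a.isUnit_iff, (hS i).neg_ne_zero_iff]⟩
  null a b c := (∀ i, (S i).null (a.val i) (b.val i) (c.val i)) ∧
    KrasnerNull a.isUnit b.isUnit c.isUnit

theorem isUnit_iff_ne_zero (x : PastureProd S) : x.isUnit = true ↔ x ≠ (str hS).zero := by
  refine ⟨fun hx h0 => ?_, fun hx => ?_⟩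
  · rw [h0] at hx
    exact Bool.false_ne_true hx
  · by_contra! hx'
    exact hx (PastureProd.ext (Bool.eq_false_iff.2 hx') (funext fun i => not_not.1
      fun hi => hx' ((x.isUnit_iff i).2 hi)))

theorem exists_mul_eq_one {x : PastureProd S} (hx : x ≠ (str hS).zero) :
    ∃ y, (str hS).mul x y = (str hS).one := by
  have hxi := fun i => (x.isUnit_iff i).1 ((isUnit_iff_ne_zero hS x).2 hx)
  choose y hy using fun i => (hS i).exists_inv (x.val i) (hxi i)
  have hyi : ∀ i, y i ≠ (S i).zero := fun i =>
    ((hS i).mul_ne_zero_iff.1 ((hy i).symm ▸ (hS i).one_ne_zero)).2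
  refine ⟨⟨true, y, fun i => iff_of_true rfl (hyi i)⟩, PastureProd.ext ?_ (funext hy)⟩
  simpa [str] using (isUnit_iff_ne_zero hS x).2 hx

theorem str_isPasture : (str hS).IsPasture where
  mul_comm a b := PastureProd.ext (Bool.and_comm _ _) (funext fun i => (hS i).mul_comm _ _)
  mul_assoc a b c :=
    PastureProd.ext (Bool.and_assoc _ _ _) (funext fun i => (hS i).mul_assoc _ _ _)
  one_mul a := PastureProd.ext (Bool.true_and _) (funext fun i => (hS i).one_mul _)
  zero_mul a := PastureProd.ext (Bool.false_and a.isUnit) (funext fun i => (hS i).zero_mul _)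
  one_ne_zero h := Bool.noConfusion (congrArg isUnit h)
  mul_ne_zero a b ha hb := by
    rw [← isUnit_iff_ne_zero] at ha hb ⊢
    exact Bool.and_eq_true_iff.2 ⟨ha, hb⟩
  exists_inv _ := exists_mul_eq_one hS
  neg_neg a := PastureProd.ext rfl (funext fun i => (hS i).neg_neg _)
  neg_zero := PastureProd.ext rfl (funext fun i => (hS i).neg_zero)
  null_swap_left _ _ _ h :=
    ⟨fun i => (hS i).null_swap_left _ _ _ (h.1 i), krasnerNull_swap_left _ _ _ h.2⟩
  null_swap_right _ _ _ h :=
    ⟨fun i => (hS i).null_swap_right _ _ _ (h.1 i), krasnerNull_swap_right _ _ _ h.2⟩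
  null_mul _ _ _ _ h :=
    ⟨fun i => (hS i).null_mul _ _ _ _ (h.1 i), krasnerNull_and_left _ _ _ _ h.2⟩
  null_zero a b := by
    refine ⟨fun h => PastureProd.ext ((krasnerNull_false_iff _ _).1 h.2)
      (funext fun i => ((hS i).null_zero _ _).1 (h.1 i)), ?_⟩
    rintro rfl
    exact ⟨fun i => ((hS i).null_zero _ _).2 rfl, (krasnerNull_false_iff _ _).2 rfl⟩

theorem isHom_val (j : I) : (str hS).IsHom (S j) (fun x => x.val j) where
  map_mul _ _ := rfl
  map_zero := rfl
  map_one := rfl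
  map_neg _ := rfl
  map_null _ _ _ h := h.1 j

variable {P' : Type w} {S' : PastureStr P'} (hS' : S'.IsPasture)

open Classical in
noncomputable def lift {f : ∀ i, P' → P i} (hf : ∀ i, S'.IsHom (S i) (f i)) (p : P') :
    PastureProd S :=
  ⟨decide (p ≠ S'.zero), fun i => f i p, fun i => by
    rw [decide_eq_true_iff, (hf i).map_ne_zero_iff hS' (hS i)]⟩

theorem isHom_lift {f : ∀ i, P' → P i} (hf : ∀ i, S'.IsHom (S i) (f i)) :
    S'.IsHom (str hS) (lift hS hS' hf) := by
  classical
  refine ⟨fun a b => ?_, ?_, ?_, fun a => ?_, fun a b c h => ?_⟩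
  · refine PastureProd.ext ?_ (funext fun i => (hf i).map_mul a b)
    simp only [lift, str, hS'.mul_ne_zero_iff, Bool.decide_and]
  · exact PastureProd.ext (by simp [lift, str]) (funext fun i => (hf i).map_zero)
  · exact PastureProd.ext (by simp [lift, str, hS'.one_ne_zero]) (funext fun i => (hf i).map_one)
  · refine PastureProd.ext ?_ (funext fun i => (hf i).map_neg a)
    simp only [lift, str, hS'.neg_ne_zero_iff]
  · exact ⟨fun i => (hf i).map_null a b c h, hS'.krasnerNull_of_null h⟩

include hS' in
theorem hom_ext {g₁ g₂ : P' → PastureProd S} (hg₁ : S'.IsHom (str hS) g₁)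
    (hg₂ : S'.IsHom (str hS) g₂) (h : ∀ p i, (g₁ p).val i = (g₂ p).val i) : g₁ = g₂ := by
  funext p
  refine PastureProd.ext (Bool.eq_iff_iff.2 ?_) (funext (h p))
  rw [isUnit_iff_ne_zero hS, isUnit_iff_ne_zero hS, hg₁.map_ne_zero_iff hS' (str_isPasture hS),
    hg₂.map_ne_zero_iff hS' (str_isPasture hS)]

end PastureProd

open PastureProd in
/-- **The category of pastures has arbitrary (set-indexed) products.**
For any index set `I` and family of pastures `(P i)_{i ∈ I}` there is a
pasture `Q` with morphisms `π j : Q → P j` such that for every pasture `P'`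
with morphisms `f i : P' → P i` there is a unique morphism `g : P' → Q`
with `π j ∘ g = f j` for all `j`. -/
theorem pastures_have_products
    {I : Type v} (P : I → Type u) (S : ∀ i, PastureStr (P i))
    (hS : ∀ i, (S i).IsPasture) :
    ∃ (Q : Type (max u v)) (SQ : PastureStr Q), SQ.IsPasture ∧
      ∃ π : ∀ j, Q → P j, (∀ j, PastureStr.IsHom SQ (S j) (π j)) ∧
        ∀ (P' : Type w) (S' : PastureStr P'), S'.IsPasture →
          ∀ f : ∀ i, P' → P i, (∀ i, PastureStr.IsHom S' (S i) (f i)) →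
            ∃! g : P' → Q, PastureStr.IsHom S' SQ g ∧ ∀ j, π j ∘ g = f j := by
  refine ⟨PastureProd S, str hS, str_isPasture hS, fun j x => x.val j, isHom_val hS, ?_⟩
  intro P' S' hS' f hf
  refine ⟨lift hS hS' hf, ⟨isHom_lift hS hS' hf, fun j => rfl⟩, ?_⟩
  rintro g ⟨hg, hgf⟩
  exact hom_ext hS hS' hg (isHom_lift hS hS' hf) fun p i => congrFun (hgf i) p
end

section
/- Given pastures P, P₁, P₂ and morphisms of pastures f₁ : P₁ → P and f₂ : P₂ → P, the fibered product P₁ ×_P P₂ with the projections π₁ and π₂ satisfies the universal property of the fibered product: if P' is a pasture and g₁ : P' → P₁, g₂ : P' → P₂ are morphisms of pastures with f₁ ∘ g₁ = f₂ ∘ g₂, then there is a unique morphism of pastures g : P' → P₁ ×_P P₂ with π₁ ∘ g = g₁ and π₂ ∘ g = g₂; explicitly, g(0)=0 and g(x) = (g₁(x), g₂(x)) for x ≠ 0. -/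
universe u v w

variable {P P₁ P₂ : Type u}

/-- The underlying set of the fibered product `P₁ ×_P P₂`:
`{0} ∪ {(a,b) : a ∈ P₁^×, b ∈ P₂^×, f₁ a = f₂ b}`, with `none` playing
the role of `0`. -/
def FibCarrier (S₁ : PastureStr P₁) (S₂ : PastureStr P₂)
    (f₁ : P₁ → P) (f₂ : P₂ → P) : Type u :=
  Option {p : P₁ × P₂ // p.1 ≠ S₁.zero ∧ p.2 ≠ S₂.zero ∧ f₁ p.1 = f₂ p.2}

/-- The pasture structure on the fibered product `P₁ ×_P P₂`: componentwise
multiplication with `0` absorbing, involution `(a,b) ↦ (-a,-b)` fixing `0`,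
and nullset given by all permutations of `0+0+0=0`, `(a,b)+(-a,-b)+0=0`, and
componentwise relations for nonzero triples. -/
def fibStr (S : PastureStr P) (S₁ : PastureStr P₁) (S₂ : PastureStr P₂)
    (hS₁ : S₁.IsPasture) (hS₂ : S₂.IsPasture) (f₁ : P₁ → P) (f₂ : P₂ → P)
    (hf₁ : S₁.IsHom S f₁) (hf₂ : S₂.IsHom S f₂) :
    PastureStr (FibCarrier S₁ S₂ f₁ f₂) where
  mul x y :=
    match x, y with
    | some a, some b =>
        some ⟨(S₁.mul a.1.1 b.1.1, S₂.mul a.1.2 b.1.2),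
          hS₁.mul_ne_zero _ _ a.2.1 b.2.1,
          hS₂.mul_ne_zero _ _ a.2.2.1 b.2.2.1, by
            show f₁ (S₁.mul a.1.1 b.1.1) = f₂ (S₂.mul a.1.2 b.1.2)
            rw [hf₁.map_mul, hf₂.map_mul, a.2.2.2, b.2.2.2]⟩
    | _, _ => none
  zero := none
  one := some ⟨(S₁.one, S₂.one), hS₁.one_ne_zero, hS₂.one_ne_zero, by
    show f₁ S₁.one = f₂ S₂.one
    rw [hf₁.map_one, hf₂.map_one]⟩
  neg x :=
    match x with
    | none => none
    | some a =>
        some ⟨(S₁.neg a.1.1, S₂.neg a.1.2),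
          fun hc => a.2.1 (by
            have hc' : S₁.neg a.1.1 = S₁.zero := hc
            rw [← hS₁.neg_neg a.1.1, hc', hS₁.neg_zero]),
          fun hc => a.2.2.1 (by
            have hc' : S₂.neg a.1.2 = S₂.zero := hc
            rw [← hS₂.neg_neg a.1.2, hc', hS₂.neg_zero]), by
            show f₁ (S₁.neg a.1.1) = f₂ (S₂.neg a.1.2)
            rw [hf₁.map_neg, hf₂.map_neg, a.2.2.2]⟩
  null x y z :=
    match x, y, z with
    | none, none, none => True
    | some a, some b, none => a.1.1 = S₁.neg b.1.1 ∧ a.1.2 = S₂.neg b.1.2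
    | some a, none, some c => a.1.1 = S₁.neg c.1.1 ∧ a.1.2 = S₂.neg c.1.2
    | none, some b, some c => b.1.1 = S₁.neg c.1.1 ∧ b.1.2 = S₂.neg c.1.2
    | some _, none, none => False
    | none, some _, none => False
    | none, none, some _ => False
    | some a, some b, some c =>
        S₁.null a.1.1 b.1.1 c.1.1 ∧ S₂.null a.1.2 b.1.2 c.1.2

/-- The first projection `π₁ : P₁ ×_P P₂ → P₁`, sending `0` to `0`. -/
def fibProj₁ (S₁ : PastureStr P₁) (S₂ : PastureStr P₂)
    (f₁ : P₁ → P) (f₂ : P₂ → P) : FibCarrier S₁ S₂ f₁ f₂ → P₁ := fun x =>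
  match x with
  | none => S₁.zero
  | some a => a.1.1

/-- The second projection `π₂ : P₁ ×_P P₂ → P₂`, sending `0` to `0`. -/
def fibProj₂ (S₁ : PastureStr P₁) (S₂ : PastureStr P₂)
    (f₁ : P₁ → P) (f₂ : P₂ → P) : FibCarrier S₁ S₂ f₁ f₂ → P₂ := fun x =>
  match x with
  | none => S₂.zero
  | some a => a.1.2

/-! A point of `P₁ ×_P P₂` is determined by its two projections, and a triple is null as soon as
both of its projections are (the cases involving `0` reduce to `a + b + 0 = 0 ↔ a = -b`). Hence a
map into `P₁ ×_P P₂` whose projections are morphisms is itself a morphism, which settles existence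
for the lift `x ↦ (g₁ x, g₂ x)`; it lands in `P₁ ×_P P₂` because morphisms out of a pasture send
only `0` to `0`. Uniqueness needs nothing but the projections. -/

namespace PastureStr

variable {A : Type v} {B : Type w} {SA : PastureStr A} {SB : PastureStr B}

theorem IsPasture.neg_ne_zero (hSA : SA.IsPasture) {a : A} (ha : a ≠ SA.zero) :
    SA.neg a ≠ SA.zero := fun h =>
  ha (by rw [← hSA.neg_neg a, h, hSA.neg_zero])

theorem IsPasture.eq_neg_of_null_zero_mid (hSA : SA.IsPasture) {a c : A}
    (h : SA.null a SA.zero c) : a = SA.neg c :=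
  (hSA.null_zero a c).mp (hSA.null_swap_right _ _ _ h)

theorem IsPasture.eq_neg_of_null_zero_left (hSA : SA.IsPasture) {b c : A}
    (h : SA.null SA.zero b c) : b = SA.neg c :=
  hSA.eq_neg_of_null_zero_mid (hSA.null_swap_left _ _ _ h)

theorem IsHom.map_ne_zero_s9 (hSA : SA.IsPasture) (hSB : SB.IsPasture) {f : A → B}
    (hf : SA.IsHom SB f) {a : A} (ha : a ≠ SA.zero) : f a ≠ SB.zero := by
  obtain ⟨b, hab⟩ := hSA.exists_inv a ha
  intro hfa
  have h := hf.map_mul a b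
  rw [hab, hf.map_one, hfa, hSB.zero_mul] at h
  exact hSB.one_ne_zero h

theorem IsHom.map_eq_zero_iff (hSA : SA.IsPasture) (hSB : SB.IsPasture) {f : A → B}
    (hf : SA.IsHom SB f) {a : A} : f a = SB.zero ↔ a = SA.zero :=
  ⟨fun h => by_contra fun ha => hf.map_ne_zero_s9 hSA hSB ha h, fun h => h ▸ hf.map_zero⟩

end PastureStr

section FiberedProduct

variable {S : PastureStr P} {S₁ : PastureStr P₁} {S₂ : PastureStr P₂}
  {hS₁ : S₁.IsPasture} {hS₂ : S₂.IsPasture} {f₁ : P₁ → P} {f₂ : P₂ → P}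
  {hf₁ : S₁.IsHom S f₁} {hf₂ : S₂.IsHom S f₂}

theorem fibProj_ext {x y : FibCarrier S₁ S₂ f₁ f₂}
    (h₁ : fibProj₁ S₁ S₂ f₁ f₂ x = fibProj₁ S₁ S₂ f₁ f₂ y)
    (h₂ : fibProj₂ S₁ S₂ f₁ f₂ x = fibProj₂ S₁ S₂ f₁ f₂ y) : x = y := by
  rcases x with _ | x <;> rcases y with _ | y
  · rfl
  · exact absurd h₁.symm y.2.1
  · exact absurd h₁ x.2.1
  · exact congrArg some (Subtype.ext (Prod.ext h₁ h₂))

theorem fibProj₁_mul (x y : FibCarrier S₁ S₂ f₁ f₂) :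
    fibProj₁ S₁ S₂ f₁ f₂ ((fibStr S S₁ S₂ hS₁ hS₂ f₁ f₂ hf₁ hf₂).mul x y) =
      S₁.mul (fibProj₁ S₁ S₂ f₁ f₂ x) (fibProj₁ S₁ S₂ f₁ f₂ y) := by
  rcases x with _ | x <;> rcases y with _ | y
  · exact (hS₁.zero_mul _).symm
  · exact (hS₁.zero_mul _).symm
  · exact (hS₁.mul_comm _ _ ▸ hS₁.zero_mul _).symm
  · rfl

theorem fibProj₂_mul (x y : FibCarrier S₁ S₂ f₁ f₂) :
    fibProj₂ S₁ S₂ f₁ f₂ ((fibStr S S₁ S₂ hS₁ hS₂ f₁ f₂ hf₁ hf₂).mul x y) =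
      S₂.mul (fibProj₂ S₁ S₂ f₁ f₂ x) (fibProj₂ S₁ S₂ f₁ f₂ y) := by
  rcases x with _ | x <;> rcases y with _ | y
  · exact (hS₂.zero_mul _).symm
  · exact (hS₂.zero_mul _).symm
  · exact (hS₂.mul_comm _ _ ▸ hS₂.zero_mul _).symm
  · rfl

theorem fibProj₁_neg (x : FibCarrier S₁ S₂ f₁ f₂) :
    fibProj₁ S₁ S₂ f₁ f₂ ((fibStr S S₁ S₂ hS₁ hS₂ f₁ f₂ hf₁ hf₂).neg x) =
      S₁.neg (fibProj₁ S₁ S₂ f₁ f₂ x) := by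
  rcases x with _ | x
  · exact hS₁.neg_zero.symm
  · rfl

theorem fibProj₂_neg (x : FibCarrier S₁ S₂ f₁ f₂) :
    fibProj₂ S₁ S₂ f₁ f₂ ((fibStr S S₁ S₂ hS₁ hS₂ f₁ f₂ hf₁ hf₂).neg x) =
      S₂.neg (fibProj₂ S₁ S₂ f₁ f₂ x) := by
  rcases x with _ | x
  · exact hS₂.neg_zero.symm
  · rfl

theorem fibStr_null_of_null_fibProj {x y z : FibCarrier S₁ S₂ f₁ f₂}
    (h₁ : S₁.null (fibProj₁ S₁ S₂ f₁ f₂ x) (fibProj₁ S₁ S₂ f₁ f₂ y) (fibProj₁ S₁ S₂ f₁ f₂ z))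
    (h₂ : S₂.null (fibProj₂ S₁ S₂ f₁ f₂ x) (fibProj₂ S₁ S₂ f₁ f₂ y) (fibProj₂ S₁ S₂ f₁ f₂ z)) :
    (fibStr S S₁ S₂ hS₁ hS₂ f₁ f₂ hf₁ hf₂).null x y z := by
  rcases x with _ | x <;> rcases y with _ | y <;> rcases z with _ | z
  · trivial
  · exact hS₁.neg_ne_zero z.2.1 (hS₁.eq_neg_of_null_zero_left h₁).symm
  · exact hS₁.neg_ne_zero y.2.1 ((hS₁.null_zero _ _).mp h₁).symm
  · exact ⟨hS₁.eq_neg_of_null_zero_left h₁, hS₂.eq_neg_of_null_zero_left h₂⟩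
  · exact x.2.1 (((hS₁.null_zero _ _).mp h₁).trans hS₁.neg_zero)
  · exact ⟨hS₁.eq_neg_of_null_zero_mid h₁, hS₂.eq_neg_of_null_zero_mid h₂⟩
  · exact ⟨(hS₁.null_zero _ _).mp h₁, (hS₂.null_zero _ _).mp h₂⟩
  · exact ⟨h₁, h₂⟩

theorem isHom_fibStr_of_isHom_fibProj {P' : Type v} {S' : PastureStr P'}
    {g : P' → FibCarrier S₁ S₂ f₁ f₂} (hg₁ : S'.IsHom S₁ (fibProj₁ S₁ S₂ f₁ f₂ ∘ g))
    (hg₂ : S'.IsHom S₂ (fibProj₂ S₁ S₂ f₁ f₂ ∘ g)) :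
    S'.IsHom (fibStr S S₁ S₂ hS₁ hS₂ f₁ f₂ hf₁ hf₂) g where
  map_mul a b := fibProj_ext
    ((hg₁.map_mul a b).trans (fibProj₁_mul _ _).symm)
    ((hg₂.map_mul a b).trans (fibProj₂_mul _ _).symm)
  map_zero := fibProj_ext hg₁.map_zero hg₂.map_zero
  map_one := fibProj_ext hg₁.map_one hg₂.map_one
  map_neg a := fibProj_ext
    ((hg₁.map_neg a).trans (fibProj₁_neg _).symm)
    ((hg₂.map_neg a).trans (fibProj₂_neg _).symm)
  map_null a b c h := fibStr_null_of_null_fibProj (hg₁.map_null a b c h) (hg₂.map_null a b c h)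

open Classical in
noncomputable def fibLift {P' : Type v} (S₁ : PastureStr P₁) (S₂ : PastureStr P₂)
    (f₁ : P₁ → P) (f₂ : P₂ → P) (g₁ : P' → P₁) (g₂ : P' → P₂) (x : P') :
    FibCarrier S₁ S₂ f₁ f₂ :=
  if hx : g₁ x ≠ S₁.zero ∧ g₂ x ≠ S₂.zero ∧ f₁ (g₁ x) = f₂ (g₂ x) then
    some ⟨(g₁ x, g₂ x), hx⟩
  else none

variable {P' : Type v} {g₁ : P' → P₁} {g₂ : P' → P₂}

theorem fibLift_of_mem {x : P'} (hx : g₁ x ≠ S₁.zero ∧ g₂ x ≠ S₂.zero ∧ f₁ (g₁ x) = f₂ (g₂ x)) :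
    fibLift S₁ S₂ f₁ f₂ g₁ g₂ x = some ⟨(g₁ x, g₂ x), hx⟩ :=
  dif_pos hx

theorem fibLift_of_not_mem {x : P'}
    (hx : ¬(g₁ x ≠ S₁.zero ∧ g₂ x ≠ S₂.zero ∧ f₁ (g₁ x) = f₂ (g₂ x))) :
    fibLift S₁ S₂ f₁ f₂ g₁ g₂ x = none :=
  dif_neg hx

theorem fibProj₁_fibLift (hcomm : ∀ x, f₁ (g₁ x) = f₂ (g₂ x))
    (hzero : ∀ x, g₁ x = S₁.zero ↔ g₂ x = S₂.zero) (x : P') :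
    fibProj₁ S₁ S₂ f₁ f₂ (fibLift S₁ S₂ f₁ f₂ g₁ g₂ x) = g₁ x := by
  by_cases hx : g₁ x = S₁.zero
  · rw [fibLift_of_not_mem fun h => h.1 hx, hx]
    rfl
  · rw [fibLift_of_mem ⟨hx, (hzero x).not.mp hx, hcomm x⟩]
    rfl

theorem fibProj₂_fibLift (hcomm : ∀ x, f₁ (g₁ x) = f₂ (g₂ x))
    (hzero : ∀ x, g₁ x = S₁.zero ↔ g₂ x = S₂.zero) (x : P') :
    fibProj₂ S₁ S₂ f₁ f₂ (fibLift S₁ S₂ f₁ f₂ g₁ g₂ x) = g₂ x := by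
  by_cases hx : g₂ x = S₂.zero
  · rw [fibLift_of_not_mem fun h => h.2.1 hx, hx]
    rfl
  · rw [fibLift_of_mem ⟨(hzero x).not.mpr hx, hx, hcomm x⟩]
    rfl

end FiberedProduct

theorem fibered_product_universal_property_general
    (S : PastureStr P) (S₁ : PastureStr P₁) (S₂ : PastureStr P₂)
    (hS₁ : S₁.IsPasture) (hS₂ : S₂.IsPasture)
    (f₁ : P₁ → P) (f₂ : P₂ → P) (hf₁ : S₁.IsHom S f₁) (hf₂ : S₂.IsHom S f₂)
    (P' : Type v) (S' : PastureStr P') (hS' : S'.IsPasture)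
    (g₁ : P' → P₁) (g₂ : P' → P₂) (hg₁ : S'.IsHom S₁ g₁) (hg₂ : S'.IsHom S₂ g₂)
    (hcomm : f₁ ∘ g₁ = f₂ ∘ g₂) :
    ∃ g : P' → FibCarrier S₁ S₂ f₁ f₂,
      (PastureStr.IsHom S' (fibStr S S₁ S₂ hS₁ hS₂ f₁ f₂ hf₁ hf₂) g ∧
        fibProj₁ S₁ S₂ f₁ f₂ ∘ g = g₁ ∧ fibProj₂ S₁ S₂ f₁ f₂ ∘ g = g₂ ∧
        g S'.zero = none ∧
        ∀ (x : P') (hx : g₁ x ≠ S₁.zero ∧ g₂ x ≠ S₂.zero ∧ f₁ (g₁ x) = f₂ (g₂ x)),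
          g x = some ⟨(g₁ x, g₂ x), hx⟩) ∧
      ∀ g' : P' → FibCarrier S₁ S₂ f₁ f₂,
        (PastureStr.IsHom S' (fibStr S S₁ S₂ hS₁ hS₂ f₁ f₂ hf₁ hf₂) g' ∧
          fibProj₁ S₁ S₂ f₁ f₂ ∘ g' = g₁ ∧ fibProj₂ S₁ S₂ f₁ f₂ ∘ g' = g₂) →
        g' = g := by
  have hzero : ∀ x, g₁ x = S₁.zero ↔ g₂ x = S₂.zero := fun x =>
    (hg₁.map_eq_zero_iff hS' hS₁).trans (hg₂.map_eq_zero_iff hS' hS₂).symm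
  have hπ₁ : fibProj₁ S₁ S₂ f₁ f₂ ∘ fibLift S₁ S₂ f₁ f₂ g₁ g₂ = g₁ :=
    funext (fibProj₁_fibLift (congrFun hcomm) hzero)
  have hπ₂ : fibProj₂ S₁ S₂ f₁ f₂ ∘ fibLift S₁ S₂ f₁ f₂ g₁ g₂ = g₂ :=
    funext (fibProj₂_fibLift (congrFun hcomm) hzero)
  refine ⟨fibLift S₁ S₂ f₁ f₂ g₁ g₂,
    ⟨isHom_fibStr_of_isHom_fibProj (hπ₁.symm ▸ hg₁) (hπ₂.symm ▸ hg₂), hπ₁, hπ₂,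
      fibLift_of_not_mem fun h => h.1 hg₁.map_zero, fun _ => fibLift_of_mem⟩, ?_⟩
  rintro g' ⟨-, hπ₁', hπ₂'⟩
  funext x
  exact fibProj_ext (congrFun (hπ₁'.trans hπ₁.symm) x) (congrFun (hπ₂'.trans hπ₂.symm) x)

/-- **The fibered product of pastures satisfies the universal property of the
fibered product**: for a pasture `P'` and morphisms `g₁ : P' → P₁`,
`g₂ : P' → P₂` with `f₁ ∘ g₁ = f₂ ∘ g₂` there is a unique morphism
`g : P' → P₁ ×_P P₂` with `π₁ ∘ g = g₁` and `π₂ ∘ g = g₂`; explicitly,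
`g 0 = 0` and `g x = (g₁ x, g₂ x)` for nonzero `x`. -/
theorem fibered_product_universal_property
    (S : PastureStr P) (S₁ : PastureStr P₁) (S₂ : PastureStr P₂)
    (hS : S.IsPasture) (hS₁ : S₁.IsPasture) (hS₂ : S₂.IsPasture)
    (f₁ : P₁ → P) (f₂ : P₂ → P) (hf₁ : S₁.IsHom S f₁) (hf₂ : S₂.IsHom S f₂)
    (P' : Type v) (S' : PastureStr P') (hS' : S'.IsPasture)
    (g₁ : P' → P₁) (g₂ : P' → P₂) (hg₁ : S'.IsHom S₁ g₁) (hg₂ : S'.IsHom S₂ g₂)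
    (hcomm : f₁ ∘ g₁ = f₂ ∘ g₂) :
    ∃ g : P' → FibCarrier S₁ S₂ f₁ f₂,
      (PastureStr.IsHom S' (fibStr S S₁ S₂ hS₁ hS₂ f₁ f₂ hf₁ hf₂) g ∧
        fibProj₁ S₁ S₂ f₁ f₂ ∘ g = g₁ ∧ fibProj₂ S₁ S₂ f₁ f₂ ∘ g = g₂ ∧
        g S'.zero = none ∧
        ∀ (x : P') (hx : g₁ x ≠ S₁.zero ∧ g₂ x ≠ S₂.zero ∧ f₁ (g₁ x) = f₂ (g₂ x)),
          g x = some ⟨(g₁ x, g₂ x), hx⟩) ∧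
      ∀ g' : P' → FibCarrier S₁ S₂ f₁ f₂,
        (PastureStr.IsHom S' (fibStr S S₁ S₂ hS₁ hS₂ f₁ f₂ hf₁ hf₂) g' ∧
          fibProj₁ S₁ S₂ f₁ f₂ ∘ g' = g₁ ∧ fibProj₂ S₁ S₂ f₁ f₂ ∘ g' = g₂) →
        g' = g :=
  fibered_product_universal_property_general S S₁ S₂ hS₁ hS₂ f₁ f₂ hf₁ hf₂ P' S' hS' g₁ g₂ hg₁ hg₂
    hcomm
end

section
/- Given pastures P, P₁, P₂ and morphisms of pastures f₁ : P → P₁ and f₂ : P → P₂, the fibered coproduct P₁ ⊗_P P₂ is a pasture: multiplication of equivalence classes is well-defined, its nonzero elements form an abelian group, the involution -[(a,b)] = [(-a,b)] = [(a,-b)] is well-defined, and its nullset satisfies the three axioms of a nullset. -/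
universe u v w

variable {P P₁ P₂ : Type u}

/-- The equivalence relation defining the fibered coproduct `P₁ ⊗_P P₂`:
`(a,b) ∼ (c,d)` iff both pairs contain a zero entry, or
`(c,d) = (f₁(x)⁻¹ a, f₂(x) b)` for some `x ∈ P^×` (expressed here as
`f₁(x) · c = a` and `d = f₂(x) · b`). -/
def tensorRel (S : PastureStr P) (S₁ : PastureStr P₁) (S₂ : PastureStr P₂)
    (f₁ : P → P₁) (f₂ : P → P₂) : P₁ × P₂ → P₁ × P₂ → Prop := fun x y =>
  ((x.1 = S₁.zero ∨ x.2 = S₂.zero) ∧ (y.1 = S₁.zero ∨ y.2 = S₂.zero)) ∨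
    ∃ z : P, z ≠ S.zero ∧ S₁.mul (f₁ z) y.1 = x.1 ∧ y.2 = S₂.mul (f₂ z) x.2

/-- The underlying set of the fibered coproduct `P₁ ⊗_P P₂`: the quotient of
the Cartesian product `P₁ × P₂` by the relation `tensorRel`. -/
def TensorCarrier (S : PastureStr P) (S₁ : PastureStr P₁) (S₂ : PastureStr P₂)
    (f₁ : P → P₁) (f₂ : P → P₂) : Type u :=
  Quot (tensorRel S S₁ S₂ f₁ f₂)

/-- The nullset of the fibered coproduct `P₁ ⊗_P P₂`:
`[(a,y)] + [(b,y)] + [(c,y)] = 0` whenever `a + b + c = 0` in `P₁` and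
`y ∈ P₂`, and `[(x,a)] + [(x,b)] + [(x,c)] = 0` whenever `a + b + c = 0` in
`P₂` and `x ∈ P₁`. -/
def tensorNull (S : PastureStr P) (S₁ : PastureStr P₁) (S₂ : PastureStr P₂)
    (f₁ : P → P₁) (f₂ : P → P₂) (u v w : TensorCarrier S S₁ S₂ f₁ f₂) : Prop :=
  (∃ a b c y, S₁.null a b c ∧
      u = Quot.mk (tensorRel S S₁ S₂ f₁ f₂) (a, y) ∧
      v = Quot.mk (tensorRel S S₁ S₂ f₁ f₂) (b, y) ∧
      w = Quot.mk (tensorRel S S₁ S₂ f₁ f₂) (c, y)) ∨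
  (∃ x a b c, S₂.null a b c ∧
      u = Quot.mk (tensorRel S S₁ S₂ f₁ f₂) (x, a) ∧
      v = Quot.mk (tensorRel S S₁ S₂ f₁ f₂) (x, b) ∧
      w = Quot.mk (tensorRel S S₁ S₂ f₁ f₂) (x, c))

/-- A pasture structure `SQ` on the quotient `P₁ ⊗_P P₂` realizes the fibered
coproduct if: its zero is `[(0,0)]`, its one is `[(1,1)]`, its multiplication
is given on classes by componentwise multiplication (in particular this
multiplication of equivalence classes is well-defined), its involution is
given by `-[(a,b)] = [(-a,b)] = [(a,-b)]` (in particular this involution is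
well-defined), and its nullset is exactly `tensorNull`. -/
def TensorSpec (S : PastureStr P) (S₁ : PastureStr P₁) (S₂ : PastureStr P₂)
    (f₁ : P → P₁) (f₂ : P → P₂)
    (SQ : PastureStr (TensorCarrier S S₁ S₂ f₁ f₂)) : Prop :=
  SQ.zero = Quot.mk (tensorRel S S₁ S₂ f₁ f₂) (S₁.zero, S₂.zero) ∧
  SQ.one = Quot.mk (tensorRel S S₁ S₂ f₁ f₂) (S₁.one, S₂.one) ∧
  (∀ (a : P₁) (b : P₂) (c : P₁) (d : P₂),
      SQ.mul (Quot.mk (tensorRel S S₁ S₂ f₁ f₂) (a, b))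
          (Quot.mk (tensorRel S S₁ S₂ f₁ f₂) (c, d)) =
        Quot.mk (tensorRel S S₁ S₂ f₁ f₂) (S₁.mul a c, S₂.mul b d)) ∧
  (∀ (a : P₁) (b : P₂),
      SQ.neg (Quot.mk (tensorRel S S₁ S₂ f₁ f₂) (a, b)) =
        Quot.mk (tensorRel S S₁ S₂ f₁ f₂) (S₁.neg a, b)) ∧
  (∀ (a : P₁) (b : P₂),
      SQ.neg (Quot.mk (tensorRel S S₁ S₂ f₁ f₂) (a, b)) =
        Quot.mk (tensorRel S S₁ S₂ f₁ f₂) (a, S₂.neg b)) ∧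
  (∀ u v w, SQ.null u v w ↔ tensorNull S S₁ S₂ f₁ f₂ u v w)

/-!
A nonzero `x ∈ P` acts on `P₁ × P₂` by `(a, b) ↦ (f₁(x)⁻¹ a, f₂(x) b)`; since `f₁(x)` and `f₂(x)`
are units, these actions compose and invert, and they neither create nor destroy a zero entry,
so `∼` is an equivalence relation whose zero-containing pairs form a single class `[(0,0)]`.
The actions commute with componentwise multiplication and negation, which are therefore well
defined, and `[(-a, b)] = [(a, -b)]` via `x = -1`. The pasture axioms of the quotient are inherited
from `P₁` and `P₂` coordinatewise. In `[(a,y)] + [(b,y)] + [(c,y)] = 0` with `[(c,y)] = 0`, either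
`c = 0`, so `a = -b`, or `y = 0`, so that all three classes are zero.
-/

namespace PastureStr.IsPasture

variable {Q : Type u} {T : PastureStr Q}

theorem mul_zero_s10 (hT : T.IsPasture) (a : Q) : T.mul a T.zero = T.zero := by
  rw [hT.mul_comm, hT.zero_mul]

theorem eq_zero_of_mul_eq_zero (hT : T.IsPasture) {a b : Q} (ha : a ≠ T.zero)
    (h : T.mul a b = T.zero) : b = T.zero :=
  Classical.byContradiction fun hb => hT.mul_ne_zero a b ha hb h

theorem left_ne_zero_of_mul_eq_one (hT : T.IsPasture) {a b : Q} (h : T.mul a b = T.one) :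
    a ≠ T.zero := fun ha => hT.one_ne_zero (by rw [← h, ha, hT.zero_mul])

theorem mul_neg (hT : T.IsPasture) (d b : Q) : T.mul d (T.neg b) = T.neg (T.mul d b) := by
  have h := hT.null_mul d _ _ _ ((hT.null_zero (T.neg b) b).mpr rfl)
  rwa [hT.mul_zero_s10, hT.null_zero] at h

theorem neg_one_ne_zero (hT : T.IsPasture) : T.neg T.one ≠ T.zero := fun h =>
  hT.one_ne_zero (by rw [← hT.neg_neg T.one, h, hT.neg_zero])

theorem neg_one_mul (hT : T.IsPasture) (a : Q) : T.mul (T.neg T.one) a = T.neg a := by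
  rw [hT.mul_comm, hT.mul_neg, hT.mul_comm, hT.one_mul]

end PastureStr.IsPasture

theorem PastureStr.IsHom.map_ne_zero_s10 {Q : Type u} {R : Type v} {T : PastureStr Q}
    {T' : PastureStr R} {f : Q → R} (hf : T.IsHom T' f) (hT : T.IsPasture) (hT' : T'.IsPasture)
    {z : Q} (hz : z ≠ T.zero) : f z ≠ T'.zero := by
  obtain ⟨w, hw⟩ := hT.exists_inv z hz
  exact hT'.left_ne_zero_of_mul_eq_one (b := f w) (by rw [← hf.map_mul, hw, hf.map_one])

section FiberedCoproduct

variable {S : PastureStr P} {S₁ : PastureStr P₁} {S₂ : PastureStr P₂} {f₁ : P → P₁} {f₂ : P → P₂}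

local notation "⟦" a " ⊗ " b "⟧" => Quot.mk (tensorRel S S₁ S₂ f₁ f₂) (a, b)

theorem degenerate_iff_of_scalar (hS : S.IsPasture) (hS₁ : S₁.IsPasture)
    (hS₂ : S₂.IsPasture) (hf₁ : S.IsHom S₁ f₁) (hf₂ : S.IsHom S₂ f₂) {x : P₁ × P₂}
    {y : P₁ × P₂} {z : P} (hz : z ≠ S.zero) (h₁ : S₁.mul (f₁ z) y.1 = x.1)
    (h₂ : y.2 = S₂.mul (f₂ z) x.2) :
    (x.1 = S₁.zero ∨ x.2 = S₂.zero) ↔ (y.1 = S₁.zero ∨ y.2 = S₂.zero) := by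
  constructor
  · rintro (h | h)
    · exact Or.inl (hS₁.eq_zero_of_mul_eq_zero (hf₁.map_ne_zero_s10 hS hS₁ hz) (h₁.trans h))
    · exact Or.inr (by rw [h₂, h, hS₂.mul_zero_s10])
  · rintro (h | h)
    · exact Or.inl (by rw [← h₁, h, hS₁.mul_zero_s10])
    · exact Or.inr (hS₂.eq_zero_of_mul_eq_zero (hf₂.map_ne_zero_s10 hS hS₂ hz) (h₂.symm.trans h))

theorem tensorRel_refl (hS : S.IsPasture) (hS₁ : S₁.IsPasture) (hS₂ : S₂.IsPasture)
    (hf₁ : S.IsHom S₁ f₁) (hf₂ : S.IsHom S₂ f₂) (x : P₁ × P₂) : tensorRel S S₁ S₂ f₁ f₂ x x :=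
  Or.inr ⟨S.one, hS.one_ne_zero, by rw [hf₁.map_one, hS₁.one_mul],
    by rw [hf₂.map_one, hS₂.one_mul]⟩

theorem tensorRel_symm (hS : S.IsPasture) (hS₁ : S₁.IsPasture) (hS₂ : S₂.IsPasture)
    (hf₁ : S.IsHom S₁ f₁) (hf₂ : S.IsHom S₂ f₂) {x y : P₁ × P₂}
    (h : tensorRel S S₁ S₂ f₁ f₂ x y) : tensorRel S S₁ S₂ f₁ f₂ y x := by
  rcases h with ⟨hx, hy⟩ | ⟨z, hz, h₁, h₂⟩
  · exact Or.inl ⟨hy, hx⟩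
  obtain ⟨w, hzw⟩ := hS.exists_inv z hz
  have hwz : S.mul w z = S.one := by rwa [hS.mul_comm]
  refine Or.inr ⟨w, hS.left_ne_zero_of_mul_eq_one hwz, ?_, ?_⟩
  · rw [← h₁, ← hS₁.mul_assoc, ← hf₁.map_mul, hwz, hf₁.map_one, hS₁.one_mul]
  · rw [h₂, ← hS₂.mul_assoc, ← hf₂.map_mul, hwz, hf₂.map_one, hS₂.one_mul]

theorem tensorRel_trans (hS : S.IsPasture) (hS₁ : S₁.IsPasture) (hS₂ : S₂.IsPasture)
    (hf₁ : S.IsHom S₁ f₁) (hf₂ : S.IsHom S₂ f₂) {x y w : P₁ × P₂}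
    (hxy : tensorRel S S₁ S₂ f₁ f₂ x y) (hyw : tensorRel S S₁ S₂ f₁ f₂ y w) :
    tensorRel S S₁ S₂ f₁ f₂ x w := by
  rcases hxy with ⟨hx, hy⟩ | ⟨z, hz, h₁, h₂⟩ <;> rcases hyw with ⟨hy', hw⟩ | ⟨z', hz', h₁', h₂'⟩
  · exact Or.inl ⟨hx, hw⟩
  · exact Or.inl ⟨hx, (degenerate_iff_of_scalar hS hS₁ hS₂ hf₁ hf₂ hz' h₁' h₂').mp hy⟩
  · exact Or.inl ⟨(degenerate_iff_of_scalar hS hS₁ hS₂ hf₁ hf₂ hz h₁ h₂).mpr hy', hw⟩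
  · refine Or.inr ⟨S.mul z z', hS.mul_ne_zero _ _ hz hz', ?_, ?_⟩
    · rw [hf₁.map_mul, hS₁.mul_assoc, h₁', h₁]
    · rw [h₂', h₂, ← hS₂.mul_assoc, ← hf₂.map_mul, hS.mul_comm z']

theorem tensorRel_equivalence (hS : S.IsPasture) (hS₁ : S₁.IsPasture) (hS₂ : S₂.IsPasture)
    (hf₁ : S.IsHom S₁ f₁) (hf₂ : S.IsHom S₂ f₂) : Equivalence (tensorRel S S₁ S₂ f₁ f₂) :=
  ⟨tensorRel_refl hS hS₁ hS₂ hf₁ hf₂, tensorRel_symm hS hS₁ hS₂ hf₁ hf₂,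
    tensorRel_trans hS hS₁ hS₂ hf₁ hf₂⟩

theorem mk_eq_mk_of_degenerate {a c : P₁} {b d : P₂} (hab : a = S₁.zero ∨ b = S₂.zero)
    (hcd : c = S₁.zero ∨ d = S₂.zero) : ⟦a ⊗ b⟧ = ⟦c ⊗ d⟧ :=
  Quot.sound (Or.inl ⟨hab, hcd⟩)

theorem mk_eq_zero_iff (hS : S.IsPasture) (hS₁ : S₁.IsPasture) (hS₂ : S₂.IsPasture)
    (hf₁ : S.IsHom S₁ f₁) (hf₂ : S.IsHom S₂ f₂) {a : P₁} {b : P₂} :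
    ⟦a ⊗ b⟧ = ⟦S₁.zero ⊗ S₂.zero⟧ ↔ a = S₁.zero ∨ b = S₂.zero := by
  refine ⟨fun h => ?_, fun h => mk_eq_mk_of_degenerate h (Or.inl rfl)⟩
  rcases (tensorRel_equivalence hS hS₁ hS₂ hf₁ hf₂).eqvGen_iff.mp (Quot.eqvGen_exact h) with
    ⟨hab, -⟩ | ⟨z, hz, h₁, h₂⟩
  · exact hab
  · exact (degenerate_iff_of_scalar hS hS₁ hS₂ hf₁ hf₂ hz h₁ h₂).mpr (Or.inl rfl)

theorem tensorRel_mul_left (hS₁ : S₁.IsPasture) (hS₂ : S₂.IsPasture) (x : P₁ × P₂)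
    {y y' : P₁ × P₂} (h : tensorRel S S₁ S₂ f₁ f₂ y y') :
    tensorRel S S₁ S₂ f₁ f₂ (S₁.mul x.1 y.1, S₂.mul x.2 y.2)
      (S₁.mul x.1 y'.1, S₂.mul x.2 y'.2) := by
  rcases h with ⟨hy, hy'⟩ | ⟨z, hz, h₁, h₂⟩
  · have hmul : ∀ v : P₁ × P₂, (v.1 = S₁.zero ∨ v.2 = S₂.zero) →
        S₁.mul x.1 v.1 = S₁.zero ∨ S₂.mul x.2 v.2 = S₂.zero := fun v hv =>
      hv.imp (fun h => by rw [h, hS₁.mul_zero_s10]) (fun h => by rw [h, hS₂.mul_zero_s10])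
    exact Or.inl ⟨hmul y hy, hmul y' hy'⟩
  · refine Or.inr ⟨z, hz, ?_, ?_⟩
    · rw [← h₁, ← hS₁.mul_assoc, ← hS₁.mul_assoc, hS₁.mul_comm (f₁ z)]
    · rw [h₂, ← hS₂.mul_assoc, ← hS₂.mul_assoc, hS₂.mul_comm x.2]

theorem tensorRel_neg_fst (hS₁ : S₁.IsPasture) {x y : P₁ × P₂}
    (h : tensorRel S S₁ S₂ f₁ f₂ x y) :
    tensorRel S S₁ S₂ f₁ f₂ (S₁.neg x.1, x.2) (S₁.neg y.1, y.2) := by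
  rcases h with ⟨hx, hy⟩ | ⟨z, hz, h₁, h₂⟩
  · have hneg : ∀ v : P₁ × P₂, (v.1 = S₁.zero ∨ v.2 = S₂.zero) →
        S₁.neg v.1 = S₁.zero ∨ v.2 = S₂.zero := fun v hv =>
      hv.imp_left fun h => by rw [h, hS₁.neg_zero]
    exact Or.inl ⟨hneg x hx, hneg y hy⟩
  · exact Or.inr ⟨z, hz, by rw [hS₁.mul_neg, h₁], h₂⟩

theorem mk_neg_fst_eq_mk_neg_snd (hS : S.IsPasture) (hS₁ : S₁.IsPasture) (hS₂ : S₂.IsPasture)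
    (hf₁ : S.IsHom S₁ f₁) (hf₂ : S.IsHom S₂ f₂) (a : P₁) (b : P₂) :
    ⟦S₁.neg a ⊗ b⟧ = ⟦a ⊗ S₂.neg b⟧ :=
  Quot.sound (Or.inr ⟨S.neg S.one, hS.neg_one_ne_zero,
    by rw [hf₁.map_neg, hf₁.map_one, hS₁.neg_one_mul],
    by rw [hf₂.map_neg, hf₂.map_one, hS₂.neg_one_mul]⟩)

variable (S f₁ f₂) in
def tensorStr (hS₁ : S₁.IsPasture) (hS₂ : S₂.IsPasture) :
    PastureStr (TensorCarrier S S₁ S₂ f₁ f₂) where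
  mul := Quot.lift₂ (fun x y => ⟦S₁.mul x.1 y.1 ⊗ S₂.mul x.2 y.2⟧)
    (fun x _ _ h => Quot.sound (tensorRel_mul_left hS₁ hS₂ x h))
    (fun _ _ y h => by
      simp only [hS₁.mul_comm _ y.1, hS₂.mul_comm _ y.2]
      exact Quot.sound (tensorRel_mul_left hS₁ hS₂ y h))
  zero := ⟦S₁.zero ⊗ S₂.zero⟧
  one := ⟦S₁.one ⊗ S₂.one⟧
  neg := Quot.lift (fun x => ⟦S₁.neg x.1 ⊗ x.2⟧)
    (fun _ _ h => Quot.sound (tensorRel_neg_fst hS₁ h))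
  null := tensorNull S S₁ S₂ f₁ f₂

theorem tensorStr_spec (hS : S.IsPasture) (hS₁ : S₁.IsPasture) (hS₂ : S₂.IsPasture)
    (hf₁ : S.IsHom S₁ f₁) (hf₂ : S.IsHom S₂ f₂) :
    TensorSpec S S₁ S₂ f₁ f₂ (tensorStr S f₁ f₂ hS₁ hS₂) :=
  ⟨rfl, rfl, fun _ _ _ _ => rfl, fun _ _ => rfl, mk_neg_fst_eq_mk_neg_snd hS hS₁ hS₂ hf₁ hf₂,
    fun _ _ _ => Iff.rfl⟩

theorem mk_ne_zero_iff (hS : S.IsPasture) (hS₁ : S₁.IsPasture) (hS₂ : S₂.IsPasture)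
    (hf₁ : S.IsHom S₁ f₁) (hf₂ : S.IsHom S₂ f₂) {a : P₁} {b : P₂} :
    ⟦a ⊗ b⟧ ≠ ⟦S₁.zero ⊗ S₂.zero⟧ ↔ a ≠ S₁.zero ∧ b ≠ S₂.zero :=
  (mk_eq_zero_iff hS hS₁ hS₂ hf₁ hf₂).not.trans not_or

theorem tensorNull_swap_left (hS₁ : S₁.IsPasture) (hS₂ : S₂.IsPasture)
    {u v w : TensorCarrier S S₁ S₂ f₁ f₂} (h : tensorNull S S₁ S₂ f₁ f₂ u v w) :
    tensorNull S S₁ S₂ f₁ f₂ v u w := by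
  rcases h with ⟨a, b, c, y, hn, hu, hv, hw⟩ | ⟨x, a, b, c, hn, hu, hv, hw⟩
  · exact Or.inl ⟨b, a, c, y, hS₁.null_swap_left a b c hn, hv, hu, hw⟩
  · exact Or.inr ⟨x, b, a, c, hS₂.null_swap_left a b c hn, hv, hu, hw⟩

theorem tensorNull_swap_right (hS₁ : S₁.IsPasture) (hS₂ : S₂.IsPasture)
    {u v w : TensorCarrier S S₁ S₂ f₁ f₂} (h : tensorNull S S₁ S₂ f₁ f₂ u v w) :
    tensorNull S S₁ S₂ f₁ f₂ u w v := by
  rcases h with ⟨a, b, c, y, hn, hu, hv, hw⟩ | ⟨x, a, b, c, hn, hu, hv, hw⟩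
  · exact Or.inl ⟨a, c, b, y, hS₁.null_swap_right a b c hn, hu, hw, hv⟩
  · exact Or.inr ⟨x, a, c, b, hS₂.null_swap_right a b c hn, hu, hw, hv⟩

theorem tensorNull_mul (hS₁ : S₁.IsPasture) (hS₂ : S₂.IsPasture)
    (d : TensorCarrier S S₁ S₂ f₁ f₂) {u v w : TensorCarrier S S₁ S₂ f₁ f₂}
    (h : tensorNull S S₁ S₂ f₁ f₂ u v w) :
    tensorNull S S₁ S₂ f₁ f₂ ((tensorStr S f₁ f₂ hS₁ hS₂).mul d u)
      ((tensorStr S f₁ f₂ hS₁ hS₂).mul d v) ((tensorStr S f₁ f₂ hS₁ hS₂).mul d w) := by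
  rcases d with ⟨p, q⟩
  rcases h with ⟨a, b, c, y, hn, rfl, rfl, rfl⟩ | ⟨x, a, b, c, hn, rfl, rfl, rfl⟩
  · exact Or.inl ⟨_, _, _, _, hS₁.null_mul p a b c hn, rfl, rfl, rfl⟩
  · exact Or.inr ⟨_, _, _, _, hS₂.null_mul q a b c hn, rfl, rfl, rfl⟩

theorem tensorNull_zero_iff (hS : S.IsPasture) (hS₁ : S₁.IsPasture) (hS₂ : S₂.IsPasture)
    (hf₁ : S.IsHom S₁ f₁) (hf₂ : S.IsHom S₂ f₂) (u v : TensorCarrier S S₁ S₂ f₁ f₂) :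
    tensorNull S S₁ S₂ f₁ f₂ u v (tensorStr S f₁ f₂ hS₁ hS₂).zero ↔
      u = (tensorStr S f₁ f₂ hS₁ hS₂).neg v := by
  constructor
  · rintro (⟨a, b, c, y, hn, rfl, rfl, hw⟩ | ⟨x, a, b, c, hn, rfl, rfl, hw⟩)
    · rcases (mk_eq_zero_iff hS hS₁ hS₂ hf₁ hf₂).mp hw.symm with rfl | rfl
      · rw [(hS₁.null_zero a b).mp hn]
        rfl
      · exact mk_eq_mk_of_degenerate (Or.inr rfl) (Or.inr rfl)
    · rcases (mk_eq_zero_iff hS hS₁ hS₂ hf₁ hf₂).mp hw.symm with rfl | rfl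
      · exact mk_eq_mk_of_degenerate (Or.inl rfl) (Or.inl hS₁.neg_zero)
      · change _ = ⟦S₁.neg x ⊗ b⟧
        rw [mk_neg_fst_eq_mk_neg_snd hS hS₁ hS₂ hf₁ hf₂, ← (hS₂.null_zero a b).mp hn]
  · rcases v with ⟨a, b⟩
    rintro rfl
    exact Or.inl ⟨S₁.neg a, a, S₁.zero, b, (hS₁.null_zero _ _).mpr rfl, rfl, rfl,
      mk_eq_mk_of_degenerate (Or.inl rfl) (Or.inl rfl)⟩

theorem tensorStr_isPasture (hS : S.IsPasture) (hS₁ : S₁.IsPasture) (hS₂ : S₂.IsPasture)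
    (hf₁ : S.IsHom S₁ f₁) (hf₂ : S.IsHom S₂ f₂) : (tensorStr S f₁ f₂ hS₁ hS₂).IsPasture where
  mul_comm := by
    rintro ⟨a, b⟩ ⟨c, d⟩
    exact congrArg (Quot.mk _) (Prod.ext (hS₁.mul_comm a c) (hS₂.mul_comm b d))
  mul_assoc := by
    rintro ⟨a, b⟩ ⟨c, d⟩ ⟨e, g⟩
    exact congrArg (Quot.mk _) (Prod.ext (hS₁.mul_assoc a c e) (hS₂.mul_assoc b d g))
  one_mul := by
    rintro ⟨a, b⟩
    exact congrArg (Quot.mk _) (Prod.ext (hS₁.one_mul a) (hS₂.one_mul b))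
  zero_mul := by
    rintro ⟨a, b⟩
    exact congrArg (Quot.mk _) (Prod.ext (hS₁.zero_mul a) (hS₂.zero_mul b))
  one_ne_zero h :=
    ((mk_eq_zero_iff hS hS₁ hS₂ hf₁ hf₂).mp h).elim hS₁.one_ne_zero hS₂.one_ne_zero
  mul_ne_zero := by
    rintro ⟨a, b⟩ ⟨c, d⟩ hab hcd
    obtain ⟨ha, hb⟩ := (mk_ne_zero_iff hS hS₁ hS₂ hf₁ hf₂).mp hab
    obtain ⟨hc, hd⟩ := (mk_ne_zero_iff hS hS₁ hS₂ hf₁ hf₂).mp hcd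
    exact (mk_ne_zero_iff hS hS₁ hS₂ hf₁ hf₂).mpr
      ⟨hS₁.mul_ne_zero a c ha hc, hS₂.mul_ne_zero b d hb hd⟩
  exists_inv := by
    rintro ⟨a, b⟩ hab
    obtain ⟨ha, hb⟩ := (mk_ne_zero_iff hS hS₁ hS₂ hf₁ hf₂).mp hab
    obtain ⟨a', ha'⟩ := hS₁.exists_inv a ha
    obtain ⟨b', hb'⟩ := hS₂.exists_inv b hb
    exact ⟨⟦a' ⊗ b'⟧, congrArg (Quot.mk _) (Prod.ext ha' hb')⟩
  neg_neg := by
    rintro ⟨a, b⟩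
    exact congrArg (Quot.mk _) (Prod.ext (hS₁.neg_neg a) rfl)
  neg_zero := congrArg (Quot.mk _) (Prod.ext hS₁.neg_zero rfl)
  null_swap_left _ _ _ := tensorNull_swap_left hS₁ hS₂
  null_swap_right _ _ _ := tensorNull_swap_right hS₁ hS₂
  null_mul d _ _ _ := tensorNull_mul hS₁ hS₂ d
  null_zero := tensorNull_zero_iff hS hS₁ hS₂ hf₁ hf₂

end FiberedCoproduct

/-- **The fibered coproduct of pastures is a pasture**: there is a pasture
structure on the quotient `P₁ ⊗_P P₂` with the prescribed zero, one,
(well-defined) multiplication and involution of classes, and nullset. -/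
theorem fibered_coproduct_is_pasture
    (S : PastureStr P) (S₁ : PastureStr P₁) (S₂ : PastureStr P₂)
    (hS : S.IsPasture) (hS₁ : S₁.IsPasture) (hS₂ : S₂.IsPasture)
    (f₁ : P → P₁) (f₂ : P → P₂) (hf₁ : S.IsHom S₁ f₁) (hf₂ : S.IsHom S₂ f₂) :
    ∃ SQ : PastureStr (TensorCarrier S S₁ S₂ f₁ f₂),
      TensorSpec S S₁ S₂ f₁ f₂ SQ ∧ SQ.IsPasture :=
  ⟨tensorStr S f₁ f₂ hS₁ hS₂, tensorStr_spec hS hS₁ hS₂ hf₁ hf₂,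
    tensorStr_isPasture hS hS₁ hS₂ hf₁ hf₂⟩
end
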